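/- arXiv:1001.0348 — 8 statements merged into one kernel-verified Lean document; each statement's English description precedes it below -/
import Mathlib

section
/- Let p > 3 be a prime and let A, B be integers with p ∤ A. Then the rational number ∑_{k=1}^{p-1} v_k(A,B)·H_k/(k·A^k) is congruent to 0 modulo p (i.e., it equals p times a rational number that is p-integral). -/
/-!
Modulo `p`, `v_k(A,B) / A^k = α^k + (1 - α)^k` with `α (1 - α) = B / A²` (`α` in an algebraic
closure of `𝔽_p`), so the sum reduces to `G(α) + G(1 - α)` for `G = ∑_{k<p} H_k X^k / k`.
Over `𝔽_p`, `G(X) + G(1 - X) = 0`: it has degree `< p`, so it suffices that its derivative and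
constant term vanish. As `X (1 - X) G' = (1 - X) ∑ H_k X^k = L := ∑_{k<p} X^k / k` (using
`H_{p-1} ≡ 0`), the derivative vanishes once `L(X) = L(1 - X)`, which in turn holds because
`X (1 - X) (L(X) - L(1 - X))' = 1 - X^p - (1 - X)^p = 0`. The constant terms vanish since
`∑ 1/k ≡ ∑ 1/k² ≡ 0` and `2 ∑ H_k / k = H_{p-1}² + ∑ 1/k²`. Finally, the rational sum is
`p`-integral, and its reduction to `𝔽_p` is the sum computed there.
-/

/-- The Lucas sequence `u_n(A,B)`. -/
def lucasU (A B : ℤ) : ℕ → ℤ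
  | 0 => 0
  | 1 => 1
  | n + 2 => A * lucasU A B (n + 1) - B * lucasU A B n

/-- The companion Lucas sequence `v_n(A,B)`. -/
def lucasV (A B : ℤ) : ℕ → ℤ
  | 0 => 2
  | 1 => A
  | n + 2 => A * lucasV A B (n + 1) - B * lucasV A B n

/-- `x ≡ y (mod p^m)` for rational numbers: `x - y = p^m * r` with `p ∤ den r`. -/
def ratCong (p m : ℕ) (x y : ℚ) : Prop :=
  ∃ r : ℚ, x - y = (p : ℚ) ^ m * r ∧ ¬ (p ∣ r.den)

open Finset Polynomial

theorem natCast_ne_zero_of_mem_Icc {R : Type*} [AddMonoidWithOne R] {p : ℕ} [CharP R p] {k : ℕ}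
    (hk : k ∈ Icc 1 (p - 1)) : (k : R) ≠ 0 := by
  rw [Ne, CharP.cast_eq_zero_iff R p]
  rw [mem_Icc] at hk
  exact fun h => absurd (Nat.le_of_dvd (by omega) h) (by omega)

section PowerSums

variable {p : ℕ} [Fact p.Prime]

theorem ZMod.sum_Icc_natCast_eq_sum_univ {M : Type*} [AddCommMonoid M] (f : ZMod p → M)
    (hf : f 0 = 0) : ∑ k ∈ Icc 1 (p - 1), f k = ∑ x, f x := by
  have hp := (Fact.out : p.Prime).two_le
  rw [← Finset.sum_erase univ hf]
  refine Finset.sum_nbij' (fun k => (k : ZMod p)) ZMod.val ?_ ?_ ?_ ?_ fun _ _ => rfl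
  · exact fun k hk => mem_erase.mpr ⟨natCast_ne_zero_of_mem_Icc hk, mem_univ _⟩
  · intro x hx
    have := ZMod.val_lt x
    have := (ZMod.val_ne_zero x).mpr (mem_erase.mp hx).1
    rw [mem_Icc]
    omega
  · intro k hk
    exact ZMod.val_cast_of_lt (by rw [mem_Icc] at hk; omega)
  · intro x _
    exact ZMod.natCast_zmod_val x

theorem sum_Icc_inv_pow_eq_zero (K : Type*) [Field K] [CharP K p] {i : ℕ} (hi₀ : 0 < i)
    (hi : i < p - 1) : ∑ k ∈ Icc 1 (p - 1), ((k : K)⁻¹) ^ i = 0 := by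
  have hZMod : ∑ k ∈ Icc 1 (p - 1), ((k : ZMod p)⁻¹) ^ i = 0 := by
    rw [ZMod.sum_Icc_natCast_eq_sum_univ (fun x => x⁻¹ ^ i) (by simp [hi₀.ne'])]
    exact (Equiv.sum_comp (Equiv.inv (ZMod p)) (· ^ i)).trans
      (FiniteField.sum_pow_lt_card_sub_one (K := ZMod p) i (by rwa [ZMod.card]))
  simpa using congrArg (ZMod.castHom (dvd_refl p) K) hZMod

end PowerSums

section Harmonic

variable (K : Type*) [Field K]

def harmonicIn (n : ℕ) : K := ∑ j ∈ Icc 1 n, (j : K)⁻¹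

variable {K}

@[simp]
theorem harmonicIn_zero : harmonicIn K 0 = 0 := by simp [harmonicIn]

theorem harmonicIn_succ (n : ℕ) : harmonicIn K (n + 1) = harmonicIn K n + ((n + 1 : ℕ) : K)⁻¹ :=
  Finset.sum_Icc_succ_top (by omega) _

theorem two_mul_sum_harmonicIn_mul_inv (n : ℕ) :
    2 * ∑ k ∈ Icc 1 n, harmonicIn K k * (k : K)⁻¹
      = harmonicIn K n ^ 2 + ∑ k ∈ Icc 1 n, ((k : K)⁻¹) ^ 2 := by
  induction n with
  | zero => simp
  | succ n ih =>
    rw [Finset.sum_Icc_succ_top (by omega), Finset.sum_Icc_succ_top (by omega), harmonicIn_succ]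
    linear_combination ih

end Harmonic

section TruncSeries

variable {R : Type*} [CommRing R] (p : ℕ)

noncomputable def truncSeries (c : ℕ → R) : R[X] := ∑ k ∈ Icc 1 (p - 1), C (c k) * X ^ k

variable {p}

theorem truncSeries_congr {c d : ℕ → R} (h : ∀ k ∈ Icc 1 (p - 1), c k = d k) :
    truncSeries p c = truncSeries p d :=
  sum_congr rfl fun k hk => by rw [h k hk]

theorem coeff_truncSeries (c : ℕ → R) (m : ℕ) :
    (truncSeries p c).coeff m = if m ∈ Icc 1 (p - 1) then c m else 0 := by
  simp only [truncSeries, finsetSum_coeff, coeff_C_mul_X_pow]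
  exact Finset.sum_ite_eq (Icc 1 (p - 1)) m c

theorem natDegree_truncSeries_lt (hp : 0 < p) (c : ℕ → R) : (truncSeries p c).natDegree < p := by
  refine (natDegree_sum_le_of_forall_le (n := p - 1) _ _ fun k hk => ?_).trans_lt (by omega)
  exact (natDegree_C_mul_X_pow_le _ _).trans (mem_Icc.mp hk).2

theorem eval_truncSeries (c : ℕ → R) (x : R) :
    (truncSeries p c).eval x = ∑ k ∈ Icc 1 (p - 1), c k * x ^ k := by
  simp [truncSeries, eval_finsetSum]

theorem eval_zero_truncSeries (c : ℕ → R) : (truncSeries p c).eval 0 = 0 := by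
  simp [← coeff_zero_eq_eval_zero, coeff_truncSeries]

theorem eval_one_truncSeries (c : ℕ → R) :
    (truncSeries p c).eval 1 = ∑ k ∈ Icc 1 (p - 1), c k := by
  simp [eval_truncSeries]

theorem X_mul_derivative_truncSeries (c : ℕ → R) :
    X * derivative (truncSeries p c) = truncSeries p fun k => c k * k := by
  simp only [truncSeries, derivative_sum, mul_sum, derivative_C_mul_X_pow, C_mul]
  refine sum_congr rfl fun k hk => ?_
  rw [mul_left_comm, mul_pow_sub_one (by rw [mem_Icc] at hk; omega)]

theorem one_sub_X_mul_truncSeries (hp : 2 ≤ p) (c : ℕ → R) :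
    (1 - X) * truncSeries p c
      = truncSeries p (fun k => c k - c (k - 1)) + C (c 0) * X - C (c (p - 1)) * X ^ p := by
  ext m
  rcases m with _ | m
  · simp [coeff_truncSeries, sub_mul, (by omega : p ≠ 0).symm]
  · simp only [sub_mul, one_mul, coeff_sub, coeff_add, coeff_X_mul, coeff_C_mul_X,
      coeff_C_mul_X_pow, coeff_truncSeries, mem_Icc, Nat.add_sub_cancel]
    split_ifs <;> try omega
    · ring
    · obtain rfl : m = 0 := by omega
      simp
    · obtain rfl : p = m + 1 := by omega
      simp
    · simp

end TruncSeries

section OneSubX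

variable {R : Type*} [CommRing R]

theorem X_mul_one_sub_X_mul_derivative_comp_one_sub_X (f : R[X]) :
    X * (1 - X) * derivative (f.comp (1 - X)) = -((1 - X) * (X * derivative f)).comp (1 - X) := by
  rw [derivative_comp_one_sub_X, mul_comp, mul_comp, X_comp, sub_comp, one_comp, X_comp]
  ring

theorem natDegree_comp_one_sub_X_le (f : R[X]) : (f.comp (1 - X)).natDegree ≤ f.natDegree :=
  natDegree_comp_le.trans (mul_le_of_le_one_right' (by compute_degree))

end OneSubX

section CharPPoly

variable {K : Type*} [Field K] {p : ℕ} [CharP K p]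

theorem eq_C_eval_zero_of_X_mul_one_sub_X_mul_derivative_eq_zero {f : K[X]}
    (hf : X * (1 - X) * derivative f = 0) (hdeg : f.natDegree < p) : f = C (f.eval 0) := by
  have hX : (X * (1 - X) : K[X]) ≠ 0 := by
    intro h
    simpa using congrArg (coeff · 1) h
  have hf' := (mul_eq_zero.mp hf).resolve_left hX
  ext m
  rcases m with _ | m
  · simp [coeff_zero_eq_eval_zero]
  rw [coeff_C_succ]
  by_cases hm : m + 1 < p
  · have hcoeff := congrArg (coeff · m) hf'
    simp only [coeff_derivative, coeff_zero] at hcoeff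
    refine (mul_eq_zero.mp hcoeff).resolve_right ?_
    exact_mod_cast natCast_ne_zero_of_mem_Icc (R := K) (mem_Icc.mpr ⟨by omega, by omega⟩)
  · exact coeff_eq_zero_of_natDegree_lt (by omega)

end CharPPoly

section Identities

variable {K : Type*} [Field K] {p : ℕ} [Fact p.Prime] [CharP K p]

theorem truncSeries_inv_comp_one_sub_X (hp : 2 < p) :
    (truncSeries p fun k => (k : K)⁻¹).comp (1 - X) = truncSeries p fun k => (k : K)⁻¹ := by
  set L : K[X] := truncSeries p fun k => (k : K)⁻¹
  have hXL : X * derivative L = truncSeries p fun _ => 1 := by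
    rw [X_mul_derivative_truncSeries]
    exact truncSeries_congr fun k hk => inv_mul_cancel₀ (natCast_ne_zero_of_mem_Icc hk)
  have hL : (1 - X) * (X * derivative L) = X - X ^ p := by
    rw [hXL, one_sub_X_mul_truncSeries hp.le]
    simp [truncSeries]
  have hderiv : X * (1 - X) * derivative (L - L.comp (1 - X)) = 0 := by
    rw [derivative_sub, mul_sub, X_mul_one_sub_X_mul_derivative_comp_one_sub_X,
      show X * (1 - X) * derivative L = (1 - X) * (X * derivative L) by ring, hL]
    simp only [sub_comp, X_comp, pow_comp, sub_pow_char]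
    simp
  have hdeg : (L - L.comp (1 - X)).natDegree < p :=
    (natDegree_sub_le _ _).trans_lt (max_lt (natDegree_truncSeries_lt (by omega) _)
      ((natDegree_comp_one_sub_X_le _).trans_lt (natDegree_truncSeries_lt (by omega) _)))
  have hconst := eq_C_eval_zero_of_X_mul_one_sub_X_mul_derivative_eq_zero hderiv hdeg
  have hsum := sum_Icc_inv_pow_eq_zero K (p := p) (i := 1) one_pos (by omega)
  simp only [pow_one] at hsum
  simp only [eval_sub, eval_comp, eval_one, eval_X, sub_zero, L, eval_zero_truncSeries,
    eval_one_truncSeries, hsum, C_0, sub_eq_zero] at hconst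
  exact hconst.symm

theorem truncSeries_harmonicIn_mul_inv_add_comp_one_sub_X (hp : 3 < p) :
    (truncSeries p fun k => harmonicIn K k * (k : K)⁻¹) +
      (truncSeries p fun k => harmonicIn K k * (k : K)⁻¹).comp (1 - X) = 0 := by
  set G : K[X] := truncSeries p fun k => harmonicIn K k * (k : K)⁻¹
  have hH : harmonicIn K (p - 1) = 0 := by
    simpa [harmonicIn] using sum_Icc_inv_pow_eq_zero K (p := p) (i := 1) one_pos (by omega)
  have hXG : X * derivative G = truncSeries p (harmonicIn K) := by
    rw [X_mul_derivative_truncSeries]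
    exact truncSeries_congr fun k hk => inv_mul_cancel_right₀ (natCast_ne_zero_of_mem_Icc hk) _
  have hh : (1 - X) * truncSeries p (harmonicIn K) = truncSeries p fun k => (k : K)⁻¹ := by
    rw [one_sub_X_mul_truncSeries (by omega), hH, harmonicIn_zero, C_0, zero_mul, add_zero,
      zero_mul, sub_zero]
    refine truncSeries_congr fun k hk => ?_
    obtain ⟨j, rfl⟩ : ∃ j, k = j + 1 := ⟨k - 1, by rw [mem_Icc] at hk; omega⟩
    rw [harmonicIn_succ, Nat.add_sub_cancel]
    ring
  have hderiv : X * (1 - X) * derivative (G + G.comp (1 - X)) = 0 := by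
    rw [derivative_add, mul_add, X_mul_one_sub_X_mul_derivative_comp_one_sub_X,
      show X * (1 - X) * derivative G = (1 - X) * (X * derivative G) by ring, hXG, hh,
      truncSeries_inv_comp_one_sub_X (by omega), add_neg_cancel]
  have hdeg : (G + G.comp (1 - X)).natDegree < p :=
    (natDegree_add_le _ _).trans_lt (max_lt (natDegree_truncSeries_lt (by omega) _)
      ((natDegree_comp_one_sub_X_le _).trans_lt (natDegree_truncSeries_lt (by omega) _)))
  have hsum : ∑ k ∈ Icc 1 (p - 1), harmonicIn K k * (k : K)⁻¹ = 0 := by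
    have h2 : (2 : K) ≠ 0 := by
      exact_mod_cast natCast_ne_zero_of_mem_Icc (R := K) (p := p) (k := 2)
        (mem_Icc.mpr ⟨by omega, by omega⟩)
    have := two_mul_sum_harmonicIn_mul_inv (K := K) (p - 1)
    rw [hH, sum_Icc_inv_pow_eq_zero K (by omega) (by omega)] at this
    simpa [h2] using this
  rw [eq_C_eval_zero_of_X_mul_one_sub_X_mul_derivative_eq_zero hderiv hdeg]
  simp [G, eval_comp, eval_zero_truncSeries, eval_one_truncSeries, hsum]

end Identities

theorem lucasV_eq_pow_add_pow {R : Type*} [CommRing R] {A B : ℤ} {a b : R} (hsum : a + b = A)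
    (hprod : a * b = B) (n : ℕ) : (lucasV A B n : R) = a ^ n + b ^ n := by
  induction n using lucasV.induct with
  | case1 => rw [lucasV]; norm_num
  | case2 => simp [lucasV, hsum]
  | case3 n ih₁ ih₀ =>
    rw [lucasV, pow_succ, pow_succ, pow_succ b, pow_succ b]
    push_cast
    rw [ih₀, ih₁, ← hsum, ← hprod]
    ring

theorem map_ringInverse {R S : Type*} [CommRing R] [CommRing S] (f : R →+* S) {x : R}
    (hx : IsUnit x) : f (Ring.inverse x) = Ring.inverse (f x) := by
  obtain ⟨u, rfl⟩ := hx
  have hfu : f u = (Units.map (f : R →* S) u : S) := rfl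
  rw [hfu, Ring.inverse_unit, Ring.inverse_unit, Units.coe_map_inv]
  rfl

/-- With `Ring.inverse` for the divisions, the same formula makes sense over `ℚ`, over the
`p`-integral rationals and in characteristic `p`. -/
noncomputable def lucasHarmonicSum (R : Type*) [CommRing R] (p : ℕ) (A B : ℤ) : R :=
  ∑ k ∈ Icc 1 (p - 1),
    (lucasV A B k : R) * (∑ j ∈ Icc 1 k, Ring.inverse (j : R)) *
      Ring.inverse ((k : R) * (A : R) ^ k)

theorem map_lucasHarmonicSum {R S : Type*} [CommRing R] [CommRing S] (f : R →+* S) {p : ℕ}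
    {A B : ℤ} (hk : ∀ k ∈ Icc 1 (p - 1), IsUnit (k : R)) (hA : IsUnit (A : R)) :
    f (lucasHarmonicSum R p A B) = lucasHarmonicSum S p A B := by
  simp only [lucasHarmonicSum, map_sum, map_mul]
  refine sum_congr rfl fun k hk' => ?_
  rw [map_ringInverse f ((hk k hk').mul (hA.pow k))]
  simp only [map_mul, map_pow, map_natCast, map_intCast]
  congr 2
  refine sum_congr rfl fun j hj => ?_
  rw [map_ringInverse f (hk j (by simp only [mem_Icc] at hj hk' ⊢; omega)), map_natCast]

theorem lucasHarmonicSum_eq_zero (K : Type*) [Field K] [IsAlgClosed K] {p : ℕ} [Fact p.Prime]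
    [CharP K p] (hp : 3 < p) {A : ℤ} (B : ℤ) (hA : (A : K) ≠ 0) :
    lucasHarmonicSum K p A B = 0 := by
  obtain ⟨a, ha⟩ := IsAlgClosed.exists_root (X ^ 2 - C (A : K) * X + C (B : K)) (by
    rw [show degree _ = 2 by compute_degree!]
    decide)
  set α := a / A
  have hv : ∀ k, (lucasV A B k : K) * ((A : K) ^ k)⁻¹ = α ^ k + (1 - α) ^ k := by
    intro k
    have hab : a * (A - a) = B := by
      simp only [IsRoot, eval_add, eval_sub, eval_mul, eval_pow, eval_C, eval_X] at ha
      linear_combination -ha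
    rw [lucasV_eq_pow_add_pow (by ring) hab, one_sub_div hA, div_pow, div_pow, add_mul,
      div_eq_mul_inv, div_eq_mul_inv]
  have hG := congrArg (eval α) (truncSeries_harmonicIn_mul_inv_add_comp_one_sub_X (K := K) hp)
  simp only [eval_add, eval_comp, eval_sub, eval_one, eval_X, eval_zero, eval_truncSeries] at hG
  rw [← hG, ← sum_add_distrib]
  simp only [lucasHarmonicSum, Ring.inverse_eq_inv', harmonicIn]
  refine sum_congr rfl fun k _ => ?_
  rw [← mul_add, ← hv, mul_inv]
  ring

section PIntegral

variable (p : ℕ) [Fact p.Prime]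

theorem natCast_den_ne_zero_of_mem_integer {x : ℚ} (hx : x ∈ (Rat.padicValuation p).integer) :
    (x.den : ZMod p) ≠ 0 := by
  rw [Ne, ZMod.natCast_eq_zero_iff]
  exact Rat.padicValuation_le_one_iff.mp hx

noncomputable def reduceModP : (Rat.padicValuation p).integer →+* ZMod p where
  toFun x := ((x : ℚ) : ZMod p)
  map_one' := by simp
  map_mul' x y := Rat.cast_mul_of_ne_zero (natCast_den_ne_zero_of_mem_integer p x.2)
    (natCast_den_ne_zero_of_mem_integer p y.2)
  map_zero' := by simp
  map_add' x y := Rat.cast_add_of_ne_zero (natCast_den_ne_zero_of_mem_integer p x.2)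
    (natCast_den_ne_zero_of_mem_integer p y.2)

theorem isUnit_intCast_integer {n : ℤ} (hn : (n : ZMod p) ≠ 0) :
    IsUnit (n : (Rat.padicValuation p).integer) := by
  by_contra h
  rw [Valuation.Integer.not_isUnit_iff_valuation_lt_one] at h
  have hv : Rat.padicValuation p n = 1 := by
    rwa [Rat.padicValuation_cast, Int.padicValuation_eq_one_iff,
      ← ZMod.intCast_zmod_eq_zero_iff_dvd]
  push_cast at h
  exact h.ne hv

theorem ratCong_one_zero_of_reduceModP_eq_zero {x : (Rat.padicValuation p).integer}
    (hx : reduceModP p x = 0) : ratCong p 1 x 0 := by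
  set q : ℚ := x.1
  have hden := natCast_den_ne_zero_of_mem_integer p x.2
  obtain ⟨m, hm⟩ : (p : ℤ) ∣ q.num := by
    rw [← ZMod.intCast_zmod_eq_zero_iff_dvd]
    change (q : ZMod p) = 0 at hx
    rwa [Rat.cast_def, div_eq_zero_iff, or_iff_left hden] at hx
  refine ⟨m / q.den, ?_, fun hdvd => ?_⟩
  · rw [sub_zero, pow_one, ← mul_div_assoc, eq_div_iff (by positivity), Rat.mul_den_eq_num, hm]
    push_cast
    ring
  · apply hden
    have h := Rat.den_dvd m q.den
    rw [Rat.divInt_eq_div, Int.cast_natCast] at h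
    rw [ZMod.natCast_eq_zero_iff]
    exact hdvd.trans (Int.natCast_dvd_natCast.mp h)

end PIntegral

theorem stmt0 (p : ℕ) (hp : p.Prime) (hp3 : 3 < p) (A B : ℤ) (hA : ¬ ((p : ℤ) ∣ A)) :
    ratCong p 1
      (∑ k ∈ Finset.Icc 1 (p - 1),
        (lucasV A B k : ℚ) * harmonic k / (k * (A : ℚ) ^ k)) 0 := by
  have := Fact.mk hp
  set K := AlgebraicClosure (ZMod p)
  have hAp : (A : ZMod p) ≠ 0 := by rwa [Ne, ZMod.intCast_zmod_eq_zero_iff_dvd]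
  have hAunit := isUnit_intCast_integer p hAp
  have hk (k : ℕ) (hmem : k ∈ Icc 1 (p - 1)) : IsUnit (k : (Rat.padicValuation p).integer) :=
    mod_cast isUnit_intCast_integer p (n := k) (mod_cast natCast_ne_zero_of_mem_Icc hmem)
  have hℚ : ((lucasHarmonicSum (Rat.padicValuation p).integer p A B : _) : ℚ)
      = ∑ k ∈ Icc 1 (p - 1), (lucasV A B k : ℚ) * harmonic k / (k * (A : ℚ) ^ k) := by
    rw [← Subring.coe_subtype, map_lucasHarmonicSum _ hk hAunit]
    simp [lucasHarmonicSum, Ring.inverse_eq_inv', harmonic_eq_sum_Icc, div_eq_mul_inv]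
  have hred : reduceModP p (lucasHarmonicSum _ p A B) = 0 := by
    apply (algebraMap (ZMod p) K).injective
    rw [← RingHom.comp_apply, map_lucasHarmonicSum _ hk hAunit, map_zero]
    refine lucasHarmonicSum_eq_zero K hp3 B ?_
    rwa [← map_intCast (algebraMap (ZMod p) K), _root_.map_ne_zero]
  rw [← hℚ]
  exact ratCong_one_zero_of_reduceModP_eq_zero p hred
end

section
/- For any prime p > 3, the rational number ∑_{k=1}^{p-1} H_k/(k·2^k) is congruent to 0 modulo p. -/
open Finset

section Binomial

variable {K : Type*} [Field K] [CharZero K]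

theorem sum_range_choose_mul_pow_succ_div (n : ℕ) (x : K) :
    ∑ i ∈ range (n + 1), (n.choose i : K) * x ^ (i + 1) / (i + 1)
      = ((1 + x) ^ (n + 1) - 1) / (n + 1) := by
  have hterm : ∀ i, (n.choose i : K) * x ^ (i + 1) / (i + 1)
      = ((n + 1).choose (i + 1) : K) * x ^ (i + 1) / (n + 1) := fun i => by
    have h : ((n + 1 : ℕ) : K) * n.choose i = (n + 1).choose (i + 1) * (i + 1 : ℕ) := by
      exact_mod_cast Nat.add_one_mul_choose_eq n i
    push_cast at h
    field_simp
    linear_combination x ^ (i + 1) * h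
  have hbinom : (1 + x) ^ (n + 1)
      = ∑ i ∈ range (n + 1), ((n + 1).choose (i + 1) : K) * x ^ (i + 1) + 1 := by
    rw [add_comm, add_pow, sum_range_succ']
    simp [mul_comm]
  simp only [hterm, ← sum_div, hbinom, add_sub_cancel_right]

theorem sum_range_choose_succ_mul_pow_div (n : ℕ) (x : K) :
    ∑ i ∈ range n, (n.choose (i + 1) : K) * x ^ (i + 1) / (i + 1)
      = ∑ i ∈ range n, ((1 + x) ^ (i + 1) - 1) / (i + 1) := by
  induction n with
  | zero => simp
  | succ n ih =>
    have hpascal : ∑ i ∈ range (n + 1), ((n + 1).choose (i + 1) : K) * x ^ (i + 1) / (i + 1)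
        = ∑ i ∈ range (n + 1), (n.choose i : K) * x ^ (i + 1) / (i + 1)
          + ∑ i ∈ range (n + 1), (n.choose (i + 1) : K) * x ^ (i + 1) / (i + 1) := by
      simp only [Nat.choose_succ_succ, Nat.cast_add, add_mul, add_div, sum_add_distrib]
    rw [hpascal, sum_range_choose_mul_pow_succ_div, sum_range_succ _ n, Nat.choose_succ_self, ih,
      sum_range_succ]
    push_cast
    ring

end Binomial

theorem sum_range_one_sub_neg_one_pow_mul_choose_div (n : ℕ) :
    ∑ i ∈ range n, (1 - (-1) ^ (i + 1) * n.choose (i + 1)) / ((i + 1 : ℕ) * 2 ^ (i + 1) : ℚ)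
      = harmonic n := by
  have h := sum_range_choose_succ_mul_pow_div n (-1 / 2 : ℚ)
  calc _ = ∑ i ∈ range n, (((i + 1 : ℕ) * 2 ^ (i + 1) : ℚ)⁻¹
        - (n.choose (i + 1) : ℚ) * (-1 / 2) ^ (i + 1) / (i + 1)) := sum_congr rfl fun i _ => by
          push_cast
          simp only [div_pow]
          field_simp
    _ = ∑ i ∈ range n, (((i + 1 : ℕ) * 2 ^ (i + 1) : ℚ)⁻¹
        - ((1 + -1 / 2) ^ (i + 1) - 1) / (i + 1)) := by rw [sum_sub_distrib, sum_sub_distrib, h]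
    _ = harmonic n := sum_congr rfl fun i _ => by
          norm_num [div_pow]
          field_simp
          ring

theorem neg_one_pow_mul_choose_eq_prod (n k : ℕ) :
    ((-1) ^ k * n.choose k : ℚ) = ∏ j ∈ range k, (1 - ((n + 1 : ℕ) : ℚ) / (j + 1 : ℕ)) := by
  induction k with
  | zero => simp
  | succ k ih =>
    have hrec : (n.choose (k + 1) : ℚ) * (k + 1) = n.choose k * (n - k) := by
      rcases le_or_gt k n with hkn | hnk
      · rw [← Nat.cast_sub hkn]
        exact_mod_cast Nat.choose_succ_right_eq n k
      · simp [Nat.choose_eq_zero_of_lt hnk, Nat.choose_eq_zero_of_lt (hnk.trans k.lt_succ_self)]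
    rw [prod_range_succ, ← ih]
    field_simp
    push_cast
    linear_combination (-(-1) ^ k) * hrec

theorem two_mul_harmonic_eq_mul_sum (n : ℕ) :
    2 * harmonic n = (n + 1) * ∑ i ∈ range n, (((i + 1 : ℕ) : ℚ) * (n - i : ℕ))⁻¹ := by
  have hreflect : harmonic n = ∑ i ∈ range n, ((n - i : ℕ) : ℚ)⁻¹ := by
    rw [harmonic, ← sum_range_reflect]
    exact sum_congr rfl fun i hi => by rw [mem_range] at hi; congr 2; omega
  rw [two_mul]
  nth_rewrite 2 [hreflect]
  rw [harmonic, ← sum_add_distrib, mul_sum]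
  refine sum_congr rfl fun i hi => ?_
  rw [mem_range] at hi
  have hni : ((n - i : ℕ) : ℚ) ≠ 0 := by norm_cast; omega
  rw [Nat.cast_sub hi.le] at hni ⊢
  field_simp
  push_cast
  ring

theorem ZMod.sum_range_pow_eq_zero {p : ℕ} [Fact p.Prime] {m : ℕ} (hm0 : m ≠ 0)
    (hm : m < p - 1) :
    ∑ i ∈ range (p - 1), ((i + 1 : ℕ) : ZMod p) ^ m = 0 := by
  have hall : ∑ i ∈ range p, (i : ZMod p) ^ m = ∑ x : ZMod p, x ^ m :=
    sum_nbij' (↑) ZMod.val (fun _ _ => mem_univ _) (fun x _ => mem_range.2 (ZMod.val_lt x))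
      (fun i hi => ZMod.val_cast_of_lt (mem_range.1 hi)) (fun x _ => ZMod.natCast_zmod_val x)
      (fun _ _ => rfl)
  have hrange : range p = range (p - 1 + 1) := by congr; omega
  rw [FiniteField.sum_pow_lt_card_sub_one _ m (by rwa [ZMod.card]), hrange, sum_range_succ'] at hall
  simpa [zero_pow hm0] using hall

namespace padicNorm

variable {p : ℕ} [hp : Fact p.Prime]

theorem le_one_iff_not_dvd_den {x : ℚ} : padicNorm p x ≤ 1 ↔ ¬ p ∣ x.den := by
  have h := Padic.norm_rat_le_one_iff_padicValuation_le_one p (x := x)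
  rw [Padic.eq_padicNorm, Rat.padicValuation_le_one_iff] at h
  exact_mod_cast h

theorem inv_natCast_eq_one {n : ℕ} (h : ¬ p ∣ n) : padicNorm p (n : ℚ)⁻¹ = 1 := by
  rw [IsAbsoluteValue.abv_inv (padicNorm p), (nat_eq_one_iff n).2 h, inv_one]

theorem intCast_le_of_dvd {z : ℤ} (h : (p : ℤ) ∣ z) : padicNorm p z ≤ (p : ℚ)⁻¹ := by
  simpa using dvd_iff_norm_le (n := 1).1 (by simpa using h)

theorem mul_le_mul {x y a b : ℚ} (hx : padicNorm p x ≤ a) (hy : padicNorm p y ≤ b)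
    (ha : 0 ≤ a) : padicNorm p (x * y) ≤ a * b := by
  rw [padicNorm.mul]
  exact _root_.mul_le_mul hx hy (padicNorm.nonneg _) ha

theorem prod_one_sub_sub_le {ι : Type*} (s : Finset ι) (a : ι → ℚ) {u : ℚ} (hu0 : 0 ≤ u)
    (hu1 : u ≤ 1) (ha : ∀ i ∈ s, padicNorm p (a i) ≤ u) :
    padicNorm p (∏ i ∈ s, (1 - a i) - (1 - ∑ i ∈ s, a i)) ≤ u ^ 2 := by
  classical
  induction s using Finset.induction_on with
  | empty => simp [sq_nonneg]
  | insert j s hj ih =>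
    rw [prod_insert hj, sum_insert hj]
    have haj := ha j (mem_insert_self j s)
    have hs : padicNorm p (∑ i ∈ s, a i) ≤ u :=
      sum_le' (fun i hi => ha i (mem_insert_of_mem hi)) hu0
    have h1a : padicNorm p (1 - a j) ≤ 1 :=
      padicNorm.sub.trans (max_le (by simp) (haj.trans hu1))
    calc padicNorm p ((1 - a j) * ∏ i ∈ s, (1 - a i) - (1 - (a j + ∑ i ∈ s, a i)))
        = padicNorm p ((∏ i ∈ s, (1 - a i) - (1 - ∑ i ∈ s, a i)) * (1 - a j)
            + (∑ i ∈ s, a i) * a j) := by congr 1; ring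
      _ ≤ u ^ 2 := padicNorm.nonarchimedean.trans (max_le
          ((mul_le_mul (ih fun i hi => ha i (mem_insert_of_mem hi)) h1a (by positivity)).trans_eq
            (mul_one _))
          ((mul_le_mul hs haj hu0).trans_eq (sq u).symm))

theorem neg_one_pow_mul_choose_pred_sub_le {k : ℕ} (hk : k < p) :
    padicNorm p ((-1) ^ k * (p - 1).choose k - (1 - p * harmonic k)) ≤ (p : ℚ)⁻¹ ^ 2 := by
  obtain ⟨n, rfl⟩ : ∃ n, p = n + 1 := ⟨p - 1, by have := hp.out.pos; omega⟩
  have hsum : ((n + 1 : ℕ) : ℚ) * harmonic k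
      = ∑ j ∈ range k, ((n + 1 : ℕ) : ℚ) / (j + 1 : ℕ) := by
    simp only [harmonic, mul_sum, div_eq_mul_inv]
  rw [Nat.add_sub_cancel, neg_one_pow_mul_choose_eq_prod, hsum]
  refine prod_one_sub_sub_le _ _ (by positivity) (inv_le_one_of_one_le₀ (by simp)) fun j hj => ?_
  rw [padicNorm.div, padicNorm_p_of_prime,
    (nat_eq_one_iff _).2 (Nat.not_dvd_of_pos_of_lt (by omega) (by simp at hj; omega)), div_one]

theorem natCast_pow_pred_sub_one_le {a : ℕ} (ha : ¬ p ∣ a) :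
    padicNorm p ((a : ℚ) ^ (p - 1) - 1) ≤ (p : ℚ)⁻¹ := by
  have hz : ((a ^ (p - 1) - 1 : ℤ) : ZMod p) = 0 := by
    push_cast
    rw [ZMod.pow_card_sub_one_eq_one (by rwa [Ne, ZMod.natCast_eq_zero_iff]), sub_self]
  simpa using intCast_le_of_dvd ((ZMod.intCast_zmod_eq_zero_iff_dvd _ p).1 hz)

-- Fermat: `1/k² ≡ k^(p-3) (mod p)`, and `∑ k^(p-3)` is a power sum over `𝔽_p`.
theorem sum_range_inv_sq_le (hp3 : 3 < p) :
    padicNorm p (∑ i ∈ range (p - 1), (((i + 1 : ℕ) : ℚ) ^ 2)⁻¹) ≤ (p : ℚ)⁻¹ := by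
  have hpow : padicNorm p (∑ i ∈ range (p - 1), ((i + 1 : ℕ) : ℚ) ^ (p - 3)) ≤ (p : ℚ)⁻¹ := by
    have hz : ((∑ i ∈ range (p - 1), ((i + 1 : ℕ) : ℤ) ^ (p - 3) : ℤ) : ZMod p) = 0 := by
      push_cast
      exact_mod_cast ZMod.sum_range_pow_eq_zero (p := p) (m := p - 3) (by omega) (by omega)
    simpa using intCast_le_of_dvd ((ZMod.intCast_zmod_eq_zero_iff_dvd _ p).1 hz)
  have hfermat : ∀ i ∈ range (p - 1),
      padicNorm p ((((i + 1 : ℕ) : ℚ) ^ 2)⁻¹ - ((i + 1 : ℕ) : ℚ) ^ (p - 3)) ≤ (p : ℚ)⁻¹ := by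
    intro i hi
    have hndvd : ¬ p ∣ i + 1 := Nat.not_dvd_of_pos_of_lt (by omega) (by simp at hi; omega)
    have hi0 : ((i + 1 : ℕ) : ℚ) ≠ 0 := by positivity
    have hsplit : (((i + 1 : ℕ) : ℚ) ^ 2)⁻¹ - ((i + 1 : ℕ) : ℚ) ^ (p - 3)
        = -(((i + 1 : ℕ) : ℚ) ^ (p - 1) - 1) * (((i + 1 : ℕ) ^ 2 : ℕ) : ℚ)⁻¹ := by
      rw [show p - 1 = p - 3 + 2 by omega, pow_add]
      push_cast
      field_simp
      ring
    rw [hsplit, padicNorm.mul, padicNorm.neg,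
      inv_natCast_eq_one fun h => hndvd (hp.out.dvd_of_dvd_pow h), mul_one]
    exact natCast_pow_pred_sub_one_le hndvd
  rw [← sub_add_cancel (∑ i ∈ range (p - 1), (((i + 1 : ℕ) : ℚ) ^ 2)⁻¹)
    (∑ i ∈ range (p - 1), ((i + 1 : ℕ) : ℚ) ^ (p - 3)), ← sum_sub_distrib]
  exact padicNorm.nonarchimedean.trans (max_le (sum_le' hfermat (by positivity)) hpow)

theorem sum_range_inv_mul_reflect_le (hp3 : 3 < p) :
    padicNorm p (∑ i ∈ range (p - 1), (((i + 1 : ℕ) : ℚ) * (p - 1 - i : ℕ))⁻¹) ≤ (p : ℚ)⁻¹ := by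
  have hsplit : ∀ i ∈ range (p - 1), (((i + 1 : ℕ) : ℚ) * (p - 1 - i : ℕ))⁻¹
      = p * ((((i + 1) ^ 2 * (p - 1 - i) : ℕ)) : ℚ)⁻¹ - (((i + 1 : ℕ) : ℚ) ^ 2)⁻¹ := by
    intro i hi
    rw [mem_range] at hi
    have hpi : ((p - 1 - i : ℕ) : ℚ) = p - (i + 1) := by
      rw [Nat.cast_sub (by omega), Nat.cast_sub (by omega)]
      ring
    have hpi0 : (p : ℚ) - (i + 1) ≠ 0 := by rw [← hpi]; norm_cast; omega
    push_cast [hpi]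
    field_simp
    ring
  rw [sum_congr rfl hsplit, sum_sub_distrib]
  refine padicNorm.sub.trans (max_le (sum_le' (fun i hi => ?_) (by positivity))
    (sum_range_inv_sq_le hp3))
  rw [mem_range] at hi
  have hndvd : ¬ p ∣ (i + 1) ^ 2 * (p - 1 - i) := fun h => by
    rcases (Nat.Prime.dvd_mul hp.out).1 h with h | h
    · exact Nat.not_dvd_of_pos_of_lt (by omega) (by omega) (hp.out.dvd_of_dvd_pow h)
    · exact Nat.not_dvd_of_pos_of_lt (by omega) (by omega) h
  rw [padicNorm.mul, padicNorm_p_of_prime, inv_natCast_eq_one hndvd, mul_one]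

/-- Wolstenholme's theorem: pairing `k` with `p - k` gives
`2 H_{p-1} = p ∑ 1/(k (p - k)) ≡ -p ∑ 1/k² (mod p²)`. -/
theorem harmonic_pred_le (hp3 : 3 < p) : padicNorm p (harmonic (p - 1)) ≤ (p : ℚ)⁻¹ ^ 2 := by
  have hp1 : ((p - 1 : ℕ) : ℚ) + 1 = p := by
    rw [Nat.cast_sub hp.out.one_le]
    ring
  have htwo : padicNorm p 2 = 1 := by
    exact_mod_cast (nat_eq_one_iff 2).2 (Nat.not_dvd_of_pos_of_lt two_pos (by omega))
  have h := two_mul_harmonic_eq_mul_sum (p - 1)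
  rw [hp1] at h
  calc padicNorm p (harmonic (p - 1)) = padicNorm p (2 * harmonic (p - 1)) := by
        rw [padicNorm.mul, htwo, one_mul]
    _ ≤ (p : ℚ)⁻¹ ^ 2 := by
        rw [h, padicNorm.mul, padicNorm_p_of_prime, sq]
        exact mul_le_mul_of_nonneg_left (sum_range_inv_mul_reflect_le hp3) (by positivity)

theorem mul_sum_range_harmonic_div_le (hp3 : 3 < p) :
    padicNorm p (p * ∑ i ∈ range (p - 1), harmonic (i + 1) / ((i + 1 : ℕ) * 2 ^ (i + 1)))
      ≤ (p : ℚ)⁻¹ ^ 2 := by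
  set c : ℕ → ℚ := fun k => (-1) ^ k * (p - 1).choose k
  set d : ℕ → ℚ := fun k => (k : ℚ) * 2 ^ k
  have hsplit : p * ∑ i ∈ range (p - 1), harmonic (i + 1) / d (i + 1)
      = ∑ i ∈ range (p - 1), (1 - c (i + 1)) / d (i + 1)
        + ∑ i ∈ range (p - 1), (c (i + 1) - (1 - p * harmonic (i + 1))) / d (i + 1) := by
    rw [mul_sum, ← sum_add_distrib]
    exact sum_congr rfl fun i _ => by ring
  rw [hsplit, sum_range_one_sub_neg_one_pow_mul_choose_div]
  refine padicNorm.nonarchimedean.trans (max_le (harmonic_pred_le hp3)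
    (sum_le' (fun i hi => ?_) (by positivity)))
  rw [mem_range] at hi
  have hndvd : ¬ p ∣ (i + 1) * 2 ^ (i + 1) := fun h => by
    rcases (Nat.Prime.dvd_mul hp.out).1 h with h | h
    · exact Nat.not_dvd_of_pos_of_lt (by omega) (by omega) h
    · exact Nat.not_dvd_of_pos_of_lt two_pos (by omega) (hp.out.dvd_of_dvd_pow h)
  have hd : padicNorm p (((i + 1 : ℕ) : ℚ) * 2 ^ (i + 1)) = 1 := by
    exact_mod_cast (nat_eq_one_iff _).2 hndvd
  rw [padicNorm.div, hd, div_one]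
  exact neg_one_pow_mul_choose_pred_sub_le (by omega)

end padicNorm

theorem ratCong_zero_of_padicNorm_le {p m : ℕ} [Fact p.Prime] {x : ℚ}
    (h : padicNorm p x ≤ (p : ℚ)⁻¹ ^ m) : ratCong p m x 0 := by
  have hp0 : (0 : ℚ) < p := by exact_mod_cast (Fact.out : p.Prime).pos
  have hpm : (p : ℚ) ^ m ≠ 0 := by positivity
  refine ⟨x / p ^ m, by rw [sub_zero, mul_div_cancel₀ _ hpm],
    padicNorm.le_one_iff_not_dvd_den.1 ?_⟩
  rw [padicNorm.div, IsAbsoluteValue.abv_pow (padicNorm p), padicNorm.padicNorm_p_of_prime,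
    div_le_one (by positivity)]
  exact h

theorem sum_Icc_one_eq_sum_range {M : Type*} [AddCommMonoid M] (f : ℕ → M) (n : ℕ) :
    ∑ k ∈ Icc 1 n, f k = ∑ i ∈ range n, f (i + 1) := by
  rw [range_eq_Ico, sum_Ico_add' f 0 n 1, zero_add, Ico_add_one_right_eq_Icc]

theorem stmt2 (p : ℕ) (hp : p.Prime) (hp3 : 3 < p) :
    ratCong p 1 (∑ k ∈ Finset.Icc 1 (p - 1), harmonic k / (k * 2 ^ k)) 0 := by
  have := Fact.mk hp
  apply ratCong_zero_of_padicNorm_le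
  have h := padicNorm.mul_sum_range_harmonic_div_le hp3
  rw [padicNorm.mul, padicNorm.padicNorm_p_of_prime, sq] at h
  rw [sum_Icc_one_eq_sum_range (fun k => harmonic k / (k * 2 ^ k)), pow_one]
  exact le_of_mul_le_mul_left h (by positivity)
end

section
/- Let p > 3 be a prime and let A, B be integers with p ∤ B and with A² − 4B a nonzero quadratic residue modulo p (i.e., the Legendre symbol ((A²−4B)/p) = 1). Then for every natural number n, the rational number ∑_{k=0}^{p-1} (1 + B^{−k})·u_k(A,B)·H_k^n is congruent to 0 modulo p. -/
open Finset

/-- The cast `ℚ → ZMod p` sends `x` to `num / den`, which is junk (`num / 0 = 0`) when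
`p ∣ den`; only on `p`-integral rationals is it additive and multiplicative. -/
def ReducesTo (p : ℕ) [Fact p.Prime] (x : ℚ) (v : ZMod p) : Prop :=
  ¬ p ∣ x.den ∧ (x : ZMod p) = v

namespace ReducesTo

variable {p : ℕ} [Fact p.Prime] {x y : ℚ} {v w : ZMod p}

lemma den_ne_zero (h : ReducesTo p x v) : (x.den : ZMod p) ≠ 0 := by
  rw [Ne, ZMod.natCast_eq_zero_iff]
  exact h.1

lemma add (hx : ReducesTo p x v) (hy : ReducesTo p y w) : ReducesTo p (x + y) (v + w) := by
  refine ⟨fun hdvd => ?_, ?_⟩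
  · rcases (Nat.Prime.dvd_mul Fact.out).mp (hdvd.trans (Rat.add_den_dvd x y)) with h | h
    exacts [hx.1 h, hy.1 h]
  · rw [Rat.cast_add_of_ne_zero hx.den_ne_zero hy.den_ne_zero, hx.2, hy.2]

lemma mul (hx : ReducesTo p x v) (hy : ReducesTo p y w) : ReducesTo p (x * y) (v * w) := by
  refine ⟨fun hdvd => ?_, ?_⟩
  · rcases (Nat.Prime.dvd_mul Fact.out).mp (hdvd.trans (Rat.mul_den_dvd x y)) with h | h
    exacts [hx.1 h, hy.1 h]
  · rw [Rat.cast_mul_of_ne_zero hx.den_ne_zero hy.den_ne_zero, hx.2, hy.2]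

lemma intCast (m : ℤ) : ReducesTo p m m :=
  ⟨by simpa using (Fact.out : p.Prime).ne_one, Rat.cast_intCast m⟩

lemma natCast (m : ℕ) : ReducesTo p m m := by
  simpa using intCast (p := p) m

lemma one : ReducesTo p 1 1 := by
  simpa using natCast (p := p) 1

lemma pow (hx : ReducesTo p x v) (n : ℕ) : ReducesTo p (x ^ n) (v ^ n) := by
  induction n with
  | zero => simpa using one
  | succ n ih => simpa only [pow_succ] using ih.mul hx

lemma inv (hx : ReducesTo p x v) (hv : v ≠ 0) : ReducesTo p x⁻¹ v⁻¹ := by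
  have hx0 : x ≠ 0 := by rintro rfl; exact hv (by simpa using hx.2.symm)
  have hnum : (x.num : ZMod p) ≠ 0 := fun h => hv <| by
    rw [← hx.2, Rat.cast_def, h, zero_div]
  refine ⟨?_, by rw [Rat.cast_inv_of_ne_zero hnum, hx.2]⟩
  rw [Rat.den_inv_of_ne_zero hx0, ← Int.natCast_dvd, ← ZMod.intCast_zmod_eq_zero_iff_dvd]
  exact hnum

lemma sum {ι : Type*} (s : Finset ι) {f : ι → ℚ} {g : ι → ZMod p}
    (h : ∀ i ∈ s, ReducesTo p (f i) (g i)) :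
    ReducesTo p (∑ i ∈ s, f i) (∑ i ∈ s, g i) := by
  induction s using Finset.cons_induction with
  | empty => simpa using natCast (p := p) 0
  | cons a s ha ih =>
    rw [sum_cons, sum_cons]
    exact (h a (mem_cons_self a s)).add (ih fun i hi => h i (mem_cons_of_mem hi))

end ReducesTo

lemma ratCong_one_zero_of_reducesTo_zero {p : ℕ} [Fact p.Prime] {x : ℚ}
    (h : ReducesTo p x 0) : ratCong p 1 x 0 := by
  have hnum : (x.num : ZMod p) = 0 := by
    simpa [Rat.cast_def, h.den_ne_zero] using h.2
  obtain ⟨m, hm⟩ := (ZMod.intCast_zmod_eq_zero_iff_dvd _ p).mp hnum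
  refine ⟨m / x.den, ?_, fun hdvd => h.1 (hdvd.trans ?_)⟩
  · conv_lhs => rw [← Rat.num_div_den x, hm]
    push_cast
    ring
  · have h := Rat.den_dvd m x.den
    rw [Rat.divInt_eq_div] at h
    exact_mod_cast h

lemma sum_range_eq_zero_of_reflect_eq_neg {R : Type*} [Ring R] [Nontrivial R] [NoZeroDivisors R]
    (hR : ringChar R ≠ 2) {f : ℕ → R} {n : ℕ} (h : ∀ k < n, f (n - 1 - k) = -f k) :
    ∑ k ∈ range n, f k = 0 := by
  refine (Ring.eq_self_iff_eq_zero_of_char_ne_two hR).mp ?_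
  rw [← sum_neg_distrib, ← sum_range_reflect]
  exact sum_congr rfl fun k hk => by rw [h k (mem_range.mp hk), neg_neg]

section Lucas

variable {K : Type*} [Field K] {A B : ℤ} {a b : K}

lemma sub_mul_lucasU (hsum : a + b = A) (hmul : a * b = B) (k : ℕ) :
    (a - b) * lucasU A B k = a ^ k - b ^ k := by
  induction k using lucasU.induct with
  | case1 => simp [lucasU]
  | case2 => simp [lucasU]
  | case3 k ih₁ ih₀ =>
    simp only [lucasU, Nat.succ_eq_add_one, Int.cast_sub, Int.cast_mul, ← hsum, ← hmul]
    linear_combination (a + b) * ih₁ - a * b * ih₀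

lemma lucasU_sub_mul_pow (hsum : a + b = A) (hmul : a * b = B) (hab : a ≠ b) {m k : ℕ}
    (ha : a ^ m = 1) (hb : b ^ m = 1) (hk : k ≤ m) :
    (lucasU A B (m - k) : K) * (B : K) ^ k = -(lucasU A B k : K) := by
  apply mul_left_cancel₀ (sub_ne_zero.mpr hab)
  have ha' : a ^ (m - k) * a ^ k = 1 := by rw [← pow_add, Nat.sub_add_cancel hk, ha]
  have hb' : b ^ (m - k) * b ^ k = 1 := by rw [← pow_add, Nat.sub_add_cancel hk, hb]
  rw [← hmul]
  linear_combination (a * b) ^ k * sub_mul_lucasU hsum hmul (m - k) +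
    sub_mul_lucasU hsum hmul k + b ^ k * ha' - a ^ k * hb'

end Lucas

lemma ZMod.natCast_sub_eq_neg {n j : ℕ} (hj : j ≤ n) :
    ((n - j : ℕ) : ZMod n) = -(j : ZMod n) := by
  rw [Nat.cast_sub hj, ZMod.natCast_self, zero_sub]

section ZModP

variable (p : ℕ) [Fact p.Prime]

def harmonicZMod (k : ℕ) : ZMod p := ∑ i ∈ range k, ((i + 1 : ℕ) : ZMod p)⁻¹

lemma reducesTo_harmonic {k : ℕ} (hk : k < p) : ReducesTo p (harmonic k) (harmonicZMod p k) := by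
  refine ReducesTo.sum _ fun i hi => (ReducesTo.natCast _).inv ?_
  rw [Ne, ZMod.natCast_eq_zero_iff]
  exact Nat.not_dvd_of_pos_of_lt i.succ_pos (by have := mem_range.mp hi; omega)

lemma harmonicZMod_succ (k : ℕ) :
    harmonicZMod p (k + 1) = harmonicZMod p k + ((k + 1 : ℕ) : ZMod p)⁻¹ :=
  sum_range_succ _ _

variable {p}

lemma harmonicZMod_reflect (hp : p ≠ 2) {k : ℕ} (hk : k ≤ p - 1) :
    harmonicZMod p (p - 1 - k) = harmonicZMod p k := by
  induction k with
  | zero =>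
    rw [Nat.sub_zero]
    have hR : ringChar (ZMod p) ≠ 2 := by rwa [ZMod.ringChar_zmod_n]
    refine (sum_range_eq_zero_of_reflect_eq_neg hR fun i hi => ?_).trans (sum_range_zero _).symm
    rw [show p - 1 - 1 - i + 1 = p - (i + 1) by omega, ZMod.natCast_sub_eq_neg (by omega), inv_neg]
  | succ k ih =>
    have h := ih (by omega)
    rw [show p - 1 - k = p - 1 - (k + 1) + 1 by omega, harmonicZMod_succ,
      show p - 1 - (k + 1) + 1 = p - (k + 1) by omega, ZMod.natCast_sub_eq_neg (by omega),
      inv_neg] at h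
    rw [harmonicZMod_succ]
    linear_combination h

lemma exists_roots_of_legendreSym_eq_one (hp : p ≠ 2) {A B : ℤ}
    (hD : legendreSym p (A ^ 2 - 4 * B) = 1) :
    ∃ a b : ZMod p, a + b = A ∧ a * b = B ∧ a ≠ b := by
  have h2 : (2 : ZMod p) ≠ 0 := Ring.two_ne_zero (by rwa [ZMod.ringChar_zmod_n])
  have hD0 : ((A ^ 2 - 4 * B : ℤ) : ZMod p) ≠ 0 := fun h => by
    rw [(legendreSym.eq_zero_iff p _).mpr h] at hD
    exact zero_ne_one hD
  obtain ⟨s, hs⟩ := (legendreSym.eq_one_iff p hD0).mp hD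
  have hs0 : s ≠ 0 := by rintro rfl; exact hD0 (by simpa using hs)
  push_cast at hs
  refine ⟨(A + s) / 2, (A - s) / 2, by field_simp; ring, by field_simp; linear_combination hs,
    fun h => hs0 ?_⟩
  field_simp at h
  exact (mul_eq_zero.mp (by linear_combination h : (2 : ZMod p) * s = 0)).resolve_left h2

variable (p) in
def lucasSummandZMod (A B : ℤ) (n k : ℕ) : ZMod p :=
  (1 + ((B : ZMod p) ^ k)⁻¹) * (lucasU A B k : ZMod p) * harmonicZMod p k ^ n

variable {A B : ℤ} {n k : ℕ}

lemma reducesTo_lucasSummand (hB : (B : ZMod p) ≠ 0) (hk : k < p) :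
    ReducesTo p ((1 + (B : ℚ) ^ (-(k : ℤ))) * (lucasU A B k : ℚ) * harmonic k ^ n)
      (lucasSummandZMod p A B n k) := by
  rw [zpow_neg, zpow_natCast]
  exact ((ReducesTo.one.add (((ReducesTo.intCast B).pow k).inv (pow_ne_zero k hB))).mul
    (ReducesTo.intCast _)).mul ((reducesTo_harmonic p hk).pow n)

lemma lucasSummandZMod_reflect (hp : p ≠ 2) (hB : (B : ZMod p) ≠ 0) {a b : ZMod p}
    (hsum : a + b = A) (hmul : a * b = B) (hab : a ≠ b) (hk : k < p) :
    lucasSummandZMod p A B n (p - 1 - k) = -lucasSummandZMod p A B n k := by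
  have hBk : (B : ZMod p) ^ k ≠ 0 := pow_ne_zero k hB
  have hBinv : ((B : ZMod p) ^ (p - 1 - k))⁻¹ = (B : ZMod p) ^ k := by
    refine inv_eq_of_mul_eq_one_right ?_
    rw [← pow_add, Nat.sub_add_cancel (by omega), ZMod.pow_card_sub_one_eq_one hB]
  have hU := lucasU_sub_mul_pow hsum hmul hab
    (ZMod.pow_card_sub_one_eq_one (left_ne_zero_of_mul (hmul ▸ hB)))
    (ZMod.pow_card_sub_one_eq_one (right_ne_zero_of_mul (hmul ▸ hB))) (k := k) (by omega)
  rw [lucasSummandZMod, lucasSummandZMod, harmonicZMod_reflect hp (by omega), hBinv]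
  linear_combination harmonicZMod p k ^ n * (1 + ((B : ZMod p) ^ k)⁻¹) * hU -
    harmonicZMod p k ^ n * (lucasU A B (p - 1 - k) : ZMod p) * mul_inv_cancel₀ hBk

end ZModP

theorem stmt5 (p : ℕ) [Fact p.Prime] (hp3 : 3 < p) (A B : ℤ) (hB : ¬ ((p : ℤ) ∣ B))
    (hD : legendreSym p (A ^ 2 - 4 * B) = 1) (n : ℕ) :
    ratCong p 1
      (∑ k ∈ Finset.range p,
        (1 + (B : ℚ) ^ (-(k : ℤ))) * (lucasU A B k : ℚ) * harmonic k ^ n) 0 := by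
  have hp2 : p ≠ 2 := by omega
  have hB0 : (B : ZMod p) ≠ 0 := by rwa [Ne, ZMod.intCast_zmod_eq_zero_iff_dvd]
  obtain ⟨a, b, hsum, hmul, hab⟩ := exists_roots_of_legendreSym_eq_one hp2 hD
  have hred := ReducesTo.sum (range p) fun k hk =>
    reducesTo_lucasSummand (A := A) (n := n) hB0 (mem_range.mp hk)
  rw [sum_range_eq_zero_of_reflect_eq_neg (by rwa [ZMod.ringChar_zmod_n])
    fun k hk => lucasSummandZMod_reflect hp2 hB0 hsum hmul hab hk] at hred
  exact ratCong_one_zero_of_reducesTo_zero hred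
end

section
/- For any prime p > 3, ∑_{k=0}^{p-1} χ(k)·H_k ≡ ((p/3) − 1)/4 · q_p(3) (mod p) as rational numbers, where χ(k) is the Jacobi symbol (k/3), (p/3) is the Jacobi symbol of p modulo 3, and q_p(3) = (3^{p−1} − 1)/p is the Fermat quotient of p to base 3. -/
open Finset
open scoped Nat

def fermatQuotient (p a : ℕ) : ℕ := (a ^ (p - 1) - 1) / p

theorem ratCong_one_of_intCast_eq {p D : ℕ} (hD : ¬ p ∣ D) {x y : ℚ} {X Y : ℤ}
    (hx : x * D = X) (hy : y * D = Y) (h : (X : ZMod p) = Y) : ratCong p 1 x y := by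
  obtain ⟨N, hN⟩ := (ZMod.intCast_eq_intCast_iff_dvd_sub Y X p).1 h.symm
  have hD0 : (D : ℚ) ≠ 0 := Nat.cast_ne_zero.2 fun h0 => hD (h0 ▸ dvd_zero p)
  refine ⟨N / D, ?_, fun hp => hD ?_⟩
  · rw [eq_div_of_mul_eq hD0 hx, eq_div_of_mul_eq hD0 hy, pow_one, ← sub_div, mul_div_assoc']
    exact_mod_cast congrArg (fun z : ℤ => (z : ℚ) / D) hN
  · have hden : ((N / D : ℚ).den : ℤ) ∣ D := by
      rw [← Int.cast_natCast D, ← Rat.divInt_eq_div]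
      exact Rat.den_dvd _ _
    exact hp.trans (Int.natCast_dvd_natCast.1 hden)

theorem prod_add_mul_of_mul_self_eq_zero {ι R : Type*} [DecidableEq ι] [CommSemiring R] {π : R}
    (hπ : π * π = 0) (s : Finset ι) (r b : ι → R) :
    ∏ j ∈ s, (r j + π * b j) = ∏ j ∈ s, r j + π * ∑ j ∈ s, b j * ∏ i ∈ s.erase j, r i := by
  induction s using Finset.induction_on with
  | empty => simp
  | insert a s ha ih =>
    set S := ∑ j ∈ s, b j * ∏ i ∈ s.erase j, r i
    have hS : ∑ j ∈ s, b j * ∏ i ∈ (insert a s).erase j, r i = r a * S := by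
      rw [mul_sum]
      refine sum_congr rfl fun j hj => ?_
      rw [erase_insert_of_ne (by rintro rfl; exact ha hj),
        prod_insert fun h => ha (mem_of_mem_erase h), mul_left_comm]
    rw [prod_insert ha, ih, prod_insert ha, sum_insert ha, erase_insert ha, hS]
    calc (r a + π * b a) * (∏ j ∈ s, r j + π * S)
        = r a * ∏ j ∈ s, r j + π * (b a * ∏ j ∈ s, r j + r a * S) + π * π * (b a * S) := by ring
      _ = _ := by rw [hπ, zero_mul, add_zero]

theorem prod_Ico_one_eq_factorial {n : ℕ} (hn : 0 < n) : ∏ j ∈ Ico 1 n, j = (n - 1)! := by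
  conv_lhs => rw [← Nat.sub_add_cancel hn]
  exact prod_Ico_id_eq_factorial _

theorem natCast_sum_factorial_div {K : Type*} [DivisionRing K] {n k : ℕ} (hk : k ≤ n)
    (h : ∀ i < k, ((i + 1 : ℕ) : K) ≠ 0) :
    ((∑ i ∈ range k, n ! / (i + 1) : ℕ) : K) = n ! * ∑ i ∈ range k, ((i + 1 : ℕ) : K)⁻¹ := by
  rw [Nat.cast_sum, mul_sum]
  refine sum_congr rfl fun i hi => ?_
  have hi := mem_range.1 hi
  rw [Nat.cast_div (Nat.dvd_factorial i.succ_pos (by omega)) (h i hi), div_eq_mul_inv]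

theorem sum_range_mul_sum_range {R : Type*} [NonUnitalNonAssocSemiring R] (n : ℕ)
    (a g : ℕ → R) :
    ∑ k ∈ range n, a k * ∑ i ∈ range k, g i = ∑ i ∈ range n, (∑ k ∈ Ico (i + 1) n, a k) * g i := by
  simp only [mul_sum, sum_mul]
  exact sum_comm' fun k i => by simp only [mem_range, mem_Ico]; omega

theorem jacobiSym_three (k : ℕ) :
    jacobiSym k 3 = if k % 3 = 0 then 0 else if k % 3 = 1 then 1 else -1 := by
  rw [jacobiSym.mod_left, show (k : ℤ) % ((3 : ℕ) : ℤ) = ((k % 3 : ℕ) : ℤ) by push_cast; rfl]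
  have : k % 3 < 3 := Nat.mod_lt _ (by norm_num)
  interval_cases k % 3 <;> norm_num

theorem sum_range_jacobiSym_three (n : ℕ) :
    ∑ k ∈ range n, jacobiSym k 3 = if n % 3 = 2 then 1 else 0 := by
  induction n with
  | zero => simp
  | succ n ih =>
    rw [sum_range_succ, ih, jacobiSym_three]
    have : n % 3 < 3 := Nat.mod_lt _ (by norm_num)
    interval_cases h : n % 3 <;> simp [h, Nat.add_mod n 1 3]

theorem ZMod.natCast_ne_zero_of_pos_of_lt {p j : ℕ} (h0 : 0 < j) (hj : j < p) :
    (j : ZMod p) ≠ 0 :=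
  (ZMod.natCast_eq_zero_iff j p).not.2 (Nat.not_dvd_of_pos_of_lt h0 hj)

section

variable {p : ℕ} [hp : Fact p.Prime]

theorem mod_three_eq_one_or_two (hp3 : 3 < p) : p % 3 = 1 ∨ p % 3 = 2 := by
  have := (Nat.Prime.eq_one_or_self_of_dvd hp.out 3).mt (by omega)
  omega

theorem one_add_mul_fermatQuotient {a : ℕ} (ha : ¬ p ∣ a) :
    1 + p * fermatQuotient p a = a ^ (p - 1) := by
  have hpos : 1 ≤ a ^ (p - 1) :=
    Nat.one_le_pow _ _ (Nat.pos_of_ne_zero (by rintro rfl; exact ha (dvd_zero p)))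
  have hdvd : p ∣ a ^ (p - 1) - 1 := by
    rw [← ZMod.natCast_eq_zero_iff, Nat.cast_sub hpos, Nat.cast_pow,
      ZMod.pow_card_sub_one_eq_one ((ZMod.natCast_eq_zero_iff a p).not.2 ha), Nat.cast_one,
      sub_self]
  rw [fermatQuotient, Nat.mul_div_cancel' hdvd]
  omega

theorem natCast_fermatQuotient {a : ℕ} (ha : ¬ p ∣ a) :
    (fermatQuotient p a : ℚ) = ((a : ℚ) ^ (p - 1) - 1) / p := by
  rw [eq_div_iff (Nat.cast_ne_zero.2 hp.out.ne_zero), ← Nat.cast_pow,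
    ← one_add_mul_fermatQuotient ha]
  push_cast
  ring

theorem prod_Ico_mul_mod_eq_factorial {a : ℕ} (ha : ¬ p ∣ a) :
    ∏ j ∈ Ico 1 p, a * j % p = (p - 1)! := by
  have hmaps : Set.MapsTo (a * · % p) (Ico 1 p) (Ico 1 p) := fun j hj => by
    rw [coe_Ico, Set.mem_Ico] at hj
    rw [coe_Ico, Set.mem_Ico]
    refine ⟨Nat.pos_of_ne_zero fun h0 => ?_, Nat.mod_lt _ hp.out.pos⟩
    rcases (Nat.Prime.dvd_mul hp.out).1 (Nat.dvd_of_mod_eq_zero h0) with h | h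
    exacts [ha h, Nat.not_dvd_of_pos_of_lt hj.1 hj.2 h]
  have hinj : Set.InjOn (a * · % p) (Ico 1 p) := fun j hj k hk hjk => by
    rw [coe_Ico, Set.mem_Ico] at hj hk
    have h : ((a * j : ℕ) : ZMod p) = ((a * k : ℕ) : ZMod p) := by
      rw [← ZMod.natCast_mod, ← ZMod.natCast_mod (a * k)]
      exact congrArg _ hjk
    push_cast at h
    have := (ZMod.natCast_eq_natCast_iff' j k p).1
      (mul_left_cancel₀ ((ZMod.natCast_eq_zero_iff a p).not.2 ha) h)
    rwa [Nat.mod_eq_of_lt hj.2, Nat.mod_eq_of_lt hk.2] at this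
  rw [← prod_Ico_one_eq_factorial hp.out.pos]
  exact prod_nbij _ hmaps hinj (surjOn_of_injOn_of_card_le _ hmaps hinj le_rfl) fun _ _ => rfl

theorem fermatQuotient_mul_factorial_modEq {a : ℕ} (ha : ¬ p ∣ a) :
    fermatQuotient p a * (p - 1)! ≡
      ∑ j ∈ Ico 1 p, (a * j / p) * ∏ i ∈ (Ico 1 p).erase j, a * i % p [MOD p] := by
  have hexp : (p - 1)! + p * (fermatQuotient p a * (p - 1)!) ≡
      (p - 1)! + p * ∑ j ∈ Ico 1 p, (a * j / p) * ∏ i ∈ (Ico 1 p).erase j, a * i % p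
      [MOD p ^ 2] := by
    rw [← ZMod.natCast_eq_natCast_iff]
    have hsq : (p : ZMod (p ^ 2)) * p = 0 := by rw [← Nat.cast_mul, ← sq, ZMod.natCast_self]
    have hprod : ∏ j ∈ Ico 1 p, a * j = a ^ (p - 1) * (p - 1)! := by
      rw [prod_mul_distrib, prod_const, Nat.card_Ico, prod_Ico_one_eq_factorial hp.out.pos]
    calc (((p - 1)! + p * (fermatQuotient p a * (p - 1)!) : ℕ) : ZMod (p ^ 2))
        = ((∏ j ∈ Ico 1 p, (a * j % p + p * (a * j / p)) : ℕ) : ZMod (p ^ 2)) := by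
          simp only [Nat.mod_add_div, hprod, ← one_add_mul_fermatQuotient ha]
          ring_nf
      _ = _ := by
          push_cast
          rw [prod_add_mul_of_mul_self_eq_zero hsq]
          push_cast [← prod_Ico_mul_mod_eq_factorial ha]
          rfl
  rw [sq] at hexp
  exact Nat.ModEq.mul_left_cancel' hp.out.ne_zero (hexp.add_left_cancel' _)

namespace ZMod

/-- Lerch's formula. -/
theorem mul_fermatQuotient_eq_sum {a : ℕ} (ha : ¬ p ∣ a) :
    (a * fermatQuotient p a : ZMod p) =
      ∑ j ∈ Ico 1 p, ((a * j / p : ℕ) : ZMod p) * (j : ZMod p)⁻¹ := by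
  have hT := (natCast_eq_natCast_iff _ _ _).2 (fermatQuotient_mul_factorial_modEq ha)
  push_cast [natCast_mod, wilsons_lemma] at hT
  have ha0 : (a : ZMod p) ≠ 0 := (natCast_eq_zero_iff a p).not.2 ha
  have hprod : ∏ i ∈ Ico 1 p, (a * i : ZMod p) = -1 := by
    have h := congrArg (Nat.cast : ℕ → ZMod p) (prod_Ico_mul_mod_eq_factorial ha)
    push_cast [natCast_mod, wilsons_lemma] at h
    exact h
  have herase :
      ∀ j ∈ Ico 1 p, ∏ i ∈ (Ico 1 p).erase j, (a * i : ZMod p) = -(a * j : ZMod p)⁻¹ := by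
    intro j hj
    have hj0 := natCast_ne_zero_of_pos_of_lt (mem_Ico.1 hj).1 (mem_Ico.1 hj).2
    rw [← inv_mul_cancel_left₀ (mul_ne_zero ha0 hj0) (∏ i ∈ (Ico 1 p).erase j, _),
      mul_prod_erase _ (fun i : ℕ => (a * i : ZMod p)) hj, hprod, mul_neg_one]
  rw [sum_congr rfl fun j hj => by rw [herase j hj]] at hT
  calc (a * fermatQuotient p a : ZMod p) = -a * (fermatQuotient p a * -1) := by ring
    _ = _ := by
      rw [hT, mul_sum]
      refine sum_congr rfl fun j _ => ?_
      field_simp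

theorem sum_inv_eq_neg_of_reflect {s t : Finset ℕ} (hs : ∀ j ∈ s, j ≤ p ∧ p - j ∈ t)
    (ht : ∀ j ∈ t, j ≤ p ∧ p - j ∈ s) :
    ∑ j ∈ t, (j : ZMod p)⁻¹ = -∑ j ∈ s, (j : ZMod p)⁻¹ := by
  rw [← sum_neg_distrib]
  refine (sum_nbij' (p - ·) (p - ·) (fun j hj => (hs j hj).2) (fun j hj => (ht j hj).2)
    (fun j hj => Nat.sub_sub_self (hs j hj).1) (fun j hj => Nat.sub_sub_self (ht j hj).1)
    fun j hj => ?_).symm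
  rw [Nat.cast_sub (hs j hj).1, natCast_self, zero_sub, inv_neg]

theorem sum_inv_eq_zero_of_reflect (hp2 : p ≠ 2) {s : Finset ℕ}
    (hs : ∀ j ∈ s, j ≤ p ∧ p - j ∈ s) : ∑ j ∈ s, (j : ZMod p)⁻¹ = 0 := by
  have h := ((neg_eq_self_iff _).1 (sum_inv_eq_neg_of_reflect hs hs).symm)
  refine h.resolve_right fun h2 => hp2 ?_
  exact ((Nat.Prime.eq_one_or_self_of_dvd hp.out 2 ⟨_, h2.symm⟩).resolve_left (by norm_num)).symm

theorem sum_Ico_one_inv_eq_zero (hp2 : p ≠ 2) : ∑ j ∈ Ico 1 p, (j : ZMod p)⁻¹ = 0 :=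
  sum_inv_eq_zero_of_reflect hp2 fun j hj => by simp only [mem_Ico] at hj ⊢; omega

/-- Lehmer's congruence. -/
theorem two_mul_sum_inv_Ico_div_three (hp3 : 3 < p) :
    2 * ∑ j ∈ Ico 1 (p / 3 + 1), (j : ZMod p)⁻¹ = -(3 * fermatQuotient p 3 : ZMod p) := by
  have hsplit := mul_fermatQuotient_eq_sum (Nat.not_dvd_of_pos_of_lt three_pos hp3)
  rw [← sum_Ico_consecutive _ (show 1 ≤ p - p / 3 by omega) (show p - p / 3 ≤ p by omega),
    ← sum_Ico_consecutive _ (show 1 ≤ p / 3 + 1 by omega) (show p / 3 + 1 ≤ p - p / 3 by omega)]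
    at hsplit
  have hmod3 := mod_three_eq_one_or_two hp3
  -- `⌊3j/p⌋` is `0`, `1`, `2` on the three ranges; `j ↦ p - j` fixes the middle one and swaps
  -- the outer ones.
  have hlow : ∑ j ∈ Ico 1 (p / 3 + 1), ((3 * j / p : ℕ) : ZMod p) * (j : ZMod p)⁻¹ = 0 :=
    sum_eq_zero fun j hj => by
      rw [mem_Ico] at hj
      rw [Nat.div_eq_of_lt (by omega), Nat.cast_zero, zero_mul]
  have hmid :
      ∑ j ∈ Ico (p / 3 + 1) (p - p / 3), ((3 * j / p : ℕ) : ZMod p) * (j : ZMod p)⁻¹ = 0 := by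
    rw [← sum_inv_eq_zero_of_reflect (p := p) (s := Ico (p / 3 + 1) (p - p / 3)) (by omega)
      fun j hj => by simp only [mem_Ico] at hj ⊢; omega]
    refine sum_congr rfl fun j hj => ?_
    rw [mem_Ico] at hj
    rw [Nat.div_eq_of_lt_le (k := 1) (by omega) (by omega), Nat.cast_one, one_mul]
  have hhigh : ∑ j ∈ Ico (p - p / 3) p, ((3 * j / p : ℕ) : ZMod p) * (j : ZMod p)⁻¹ =
      -(2 * ∑ j ∈ Ico 1 (p / 3 + 1), (j : ZMod p)⁻¹) := by
    rw [← mul_neg, ← sum_inv_eq_neg_of_reflect (s := Ico 1 (p / 3 + 1)) (t := Ico (p - p / 3) p)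
      (fun j hj => by simp only [mem_Ico] at hj ⊢; omega)
      (fun j hj => by simp only [mem_Ico] at hj ⊢; omega), mul_sum]
    refine sum_congr rfl fun j hj => ?_
    rw [mem_Ico] at hj
    rw [Nat.div_eq_of_lt_le (k := 2) (by omega) (by omega), Nat.cast_ofNat]
  rw [hlow, hmid, hhigh, zero_add, zero_add] at hsplit
  push_cast at hsplit ⊢
  rw [hsplit, neg_neg]

theorem four_mul_sum_inv_filter_mod_three (hp3 : 3 < p) :
    4 * ∑ j ∈ (Ico 1 p).filter (· % 3 = 2), (j : ZMod p)⁻¹ =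
      (1 - jacobiSym p 3) * fermatQuotient p 3 := by
  rcases mod_three_eq_one_or_two hp3 with h1 | h2
  · rw [sum_inv_eq_zero_of_reflect (by omega)
      fun j hj => by simp only [mem_filter, mem_Ico] at hj ⊢; omega, jacobiSym_three,
      if_neg (by omega), if_pos h1]
    simp
  · have hrefl : ∑ j ∈ (Ico 1 p).filter (· % 3 = 2), (j : ZMod p)⁻¹ =
        -∑ j ∈ (Ico 1 p).filter (· % 3 = 0), (j : ZMod p)⁻¹ :=
      sum_inv_eq_neg_of_reflect (fun j hj => by simp only [mem_filter, mem_Ico] at hj ⊢; omega)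
        fun j hj => by simp only [mem_filter, mem_Ico] at hj ⊢; omega
    have hthirds : ∑ j ∈ Ico 1 (p / 3 + 1), (3 : ZMod p)⁻¹ * (j : ZMod p)⁻¹ =
        ∑ j ∈ (Ico 1 p).filter (· % 3 = 0), (j : ZMod p)⁻¹ := by
      refine sum_nbij' (3 * ·) (· / 3) (fun j hj => ?_) (fun j hj => ?_) (fun j hj => ?_)
        (fun j hj => ?_) fun j hj => by push_cast; rw [mul_inv]
      all_goals simp only [mem_filter, mem_Ico] at hj ⊢
      all_goals omega
    have h3 : (3 : ZMod p) ≠ 0 := by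
      exact_mod_cast natCast_ne_zero_of_pos_of_lt (p := p) three_pos hp3
    have hlehmer := two_mul_sum_inv_Ico_div_three hp3
    rw [hrefl, ← hthirds, ← mul_sum, jacobiSym_three, if_neg (by omega), if_neg (by omega)]
    push_cast
    linear_combination
      (-2 * 3⁻¹ : ZMod p) * hlehmer + 2 * (fermatQuotient p 3 : ZMod p) * mul_inv_cancel₀ h3

theorem four_mul_sum_jacobiSym_mul_sum_inv (hp3 : 3 < p) :
    4 * ∑ k ∈ range p, (jacobiSym k 3 : ZMod p) * ∑ i ∈ range k, ((i + 1 : ℕ) : ZMod p)⁻¹ =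
      ((jacobiSym p 3 : ZMod p) - 1) * fermatQuotient p 3 := by
  set C : ℕ → ZMod p := fun n => if n % 3 = 2 then 1 else 0
  have htail :
      ∀ i ∈ range p, ∑ k ∈ Ico (i + 1) p, (jacobiSym k 3 : ZMod p) = C p - C (i + 1) := by
    intro i hi
    rw [← Int.cast_sum, sum_Ico_eq_sub _ (by simpa using hi), sum_range_jacobiSym_three,
      sum_range_jacobiSym_three]
    simp only [C]
    push_cast
    split_ifs <;> ring
  -- after the shift `j = i + 1`, the term `j = p` vanishes since `(p : ZMod p)⁻¹ = 0⁻¹ = 0`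
  rw [sum_range_mul_sum_range, sum_congr rfl fun i hi => by rw [htail i hi], range_eq_Ico,
    sum_Ico_add' (fun j : ℕ => (C p - C j) * (j : ZMod p)⁻¹), sum_Ico_succ_top (by omega),
    natCast_self, inv_zero, mul_zero, add_zero]
  have hfilter : ∑ j ∈ Ico 1 p, C j * (j : ZMod p)⁻¹ =
      ∑ j ∈ (Ico 1 p).filter (· % 3 = 2), (j : ZMod p)⁻¹ := by
    rw [sum_filter]
    exact sum_congr rfl fun j _ => by simp only [C, ite_mul, one_mul, zero_mul]
  rw [zero_add, sum_congr rfl fun j _ => sub_mul (C p) (C j) _, sum_sub_distrib, ← mul_sum,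
    sum_Ico_one_inv_eq_zero (by omega), mul_zero, zero_sub, hfilter, mul_neg,
    four_mul_sum_inv_filter_mod_three hp3]
  ring

end ZMod

end

theorem stmt8 (p : ℕ) (hp : p.Prime) (hp3 : 3 < p) :
    ratCong p 1
      (∑ k ∈ Finset.range p, (jacobiSym k 3 : ℚ) * harmonic k)
      (((jacobiSym p 3 : ℚ) - 1) / 4 * ((3 ^ (p - 1) - 1) / p)) := by
  have := Fact.mk hp
  have hk : ∀ k ∈ range p, k ≤ p - 1 := fun k hk => Nat.le_sub_one_of_lt (mem_range.1 hk)
  refine ratCong_one_of_intCast_eq (D := 4 * (p - 1)!)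
    (X := 4 * ∑ k ∈ range p, jacobiSym k 3 * ((∑ i ∈ range k, (p - 1)! / (i + 1) : ℕ) : ℤ))
    (Y := (jacobiSym p 3 - 1) * fermatQuotient p 3 * (p - 1)!) ?_ ?_ ?_ ?_
  · have : p ≠ 4 := by rintro rfl; norm_num at hp
    rw [hp.dvd_mul, hp.dvd_factorial, not_or]
    exact ⟨Nat.not_dvd_of_pos_of_lt four_pos (by omega), by omega⟩
  · simp only [Int.cast_mul, Int.cast_sum, Int.cast_natCast, Int.cast_ofNat, Nat.cast_mul]
    rw [sum_mul, mul_sum]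
    refine sum_congr rfl fun k hk' => ?_
    rw [natCast_sum_factorial_div (hk k hk') fun i _ => by positivity, harmonic]
    ring
  · have hq := natCast_fermatQuotient (p := p) (Nat.not_dvd_of_pos_of_lt three_pos hp3)
    rw [Nat.cast_ofNat] at hq
    rw [← hq]
    push_cast
    ring
  · simp only [Int.cast_mul, Int.cast_sum, Int.cast_natCast, Int.cast_ofNat, Int.cast_sub,
      Int.cast_one]
    rw [sum_congr rfl fun k hk' => by
      rw [natCast_sum_factorial_div (hk k hk') fun i hi =>
        ZMod.natCast_ne_zero_of_pos_of_lt i.succ_pos (by have := hk k hk'; omega), mul_left_comm],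
      ← mul_sum]
    linear_combination ((p - 1)! : ZMod p) * ZMod.four_mul_sum_jacobiSym_mul_sum_inv hp3
end

section
/- Let p > 5 be a prime with p ≡ 7, 11, 13, or 14 (mod 15). Then the rational number ∑_{k=0}^{p-1} u_{k+1}(1,4)·H_k/2^k is congruent to 0 modulo p. -/
/-!
Work in a field `K` of characteristic `p` containing `s = √-15`. As `(-15/p) = -1`, Frobenius sends
`s` to `-s`, so `x = (1 + s)/4` satisfies `x^p = x⁻¹`; and since `2x, 2x⁻¹` are the roots of
`t² - t + 4`, `u_{k+1}/2^k = (x^{k+1} - x^{-k-1})/(x - x⁻¹)`. Abel summation gives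
`(1 - x) ∑_{k<p} H_k x^k = ∑_{j<p} x^j/j - H_{p-1} x^p`, where `H_{p-1} ≡ 0`, and the reflection
`j ↦ p - j` gives `∑_{j<p} x^j/j = -x^p ∑_{j<p} x^{-j}/j`. Together these yield
`x ∑ H_k x^k = x⁻¹ ∑ H_k x^{-k}`, which is the vanishing of the sum in `K`. All denominators are
prime to `p`, so this is the reduction mod `p` of the rational sum.
-/

open Finset

theorem lucasU_mul_sub {R : Type*} [CommRing R] {A B : ℤ} {a b : R}
    (hsum : a + b = A) (hprod : a * b = B) (n : ℕ) :
    (lucasU A B n : R) * (a - b) = a ^ n - b ^ n := by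
  induction n using Nat.twoStepInduction with
  | zero => simp [lucasU]
  | one => simp [lucasU]
  | more n ih₀ ih₁ =>
    rw [lucasU]
    push_cast
    linear_combination -(a - b) * lucasU A B (n + 1) * hsum + (a - b) * lucasU A B n * hprod
      + (a + b) * ih₁ - a * b * ih₀

-- `truncLog k 1` is the harmonic number `H_k`, computed in `K`.
def truncLog {K : Type*} [Field K] (n : ℕ) (x : K) : K :=
  ∑ i ∈ range n, x ^ (i + 1) / (i + 1 : ℕ)

theorem one_sub_mul_sum_truncLog_one_mul_pow {K : Type*} [Field K] (x : K) (n : ℕ) :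
    (1 - x) * ∑ k ∈ range (n + 1), truncLog k (1 : K) * x ^ k
      = truncLog n x - truncLog n 1 * x ^ (n + 1) := by
  induction n with
  | zero => simp [truncLog]
  | succ n ih =>
    rw [sum_range_succ, mul_add, ih]
    simp only [truncLog, sum_range_succ, one_pow]
    ring

section CharP

variable {K : Type*} [Field K] {p : ℕ} [CharP K p]

theorem truncLog_pred_eq_neg (x : K) (hx : x ≠ 0) :
    truncLog (p - 1) x = -(x ^ p * truncLog (p - 1) x⁻¹) := by
  rw [truncLog, ← sum_range_reflect, truncLog, mul_sum, ← sum_neg_distrib]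
  refine sum_congr rfl fun i hi => ?_
  have hi : i + 1 < p := by rw [mem_range] at hi; omega
  rw [show p - 1 - 1 - i + 1 = p - (i + 1) by omega, Nat.cast_sub hi.le, CharP.cast_eq_zero,
    zero_sub, pow_sub₀ _ hx hi.le, inv_pow]
  ring

theorem truncLog_pred_one_eq_zero (h2 : (2 : K) ≠ 0) : truncLog (p - 1) (1 : K) = 0 := by
  have h := truncLog_pred_eq_neg (p := p) (1 : K) one_ne_zero
  rw [inv_one, one_pow, one_mul, eq_neg_iff_add_eq_zero, ← two_mul] at h
  exact (mul_eq_zero.mp h).resolve_left h2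

theorem mul_sum_truncLog_mul_pow_inv [Fact p.Prime] (h2 : (2 : K) ≠ 0) {x : K}
    (hx : x ^ (p + 1) = 1) (hx1 : x ≠ 1) :
    x * ∑ k ∈ range p, truncLog k (1 : K) * x ^ k
      = x⁻¹ * ∑ k ∈ range p, truncLog k (1 : K) * x⁻¹ ^ k := by
  have hp : p = p - 1 + 1 := (Nat.succ_pred_eq_of_pos (Fact.out : p.Prime).pos).symm
  have hx0 : x ≠ 0 := by rintro rfl; simp at hx
  have hxp : x ^ p = x⁻¹ := eq_inv_of_mul_eq_one_left (by rw [← pow_succ, hx])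
  have hA := one_sub_mul_sum_truncLog_one_mul_pow x (p - 1)
  have hB := one_sub_mul_sum_truncLog_one_mul_pow x⁻¹ (p - 1)
  rw [← hp, truncLog_pred_one_eq_zero h2, zero_mul, sub_zero] at hA hB
  have hL := truncLog_pred_eq_neg x hx0
  rw [hxp] at hL
  have hx1' : x⁻¹ ≠ 1 := inv_ne_one.mpr hx1
  apply mul_left_cancel₀ (mul_ne_zero (sub_ne_zero.mpr hx1.symm) (sub_ne_zero.mpr hx1'.symm))
  linear_combination (x * (1 - x⁻¹)) * hA - x⁻¹ * (1 - x) * hB + x * (1 - x⁻¹) * hL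
    + x⁻¹ * truncLog (p - 1) x⁻¹ * mul_inv_cancel₀ hx0

theorem natCast_ne_zero_of_lt {n : ℕ} (hn0 : n ≠ 0) (hnp : n < p) : (n : K) ≠ 0 :=
  (CharP.cast_eq_zero_iff K p n).not.mpr (Nat.not_dvd_of_pos_of_lt (Nat.pos_of_ne_zero hn0) hnp)

theorem pow_char_eq_neg_of_legendreSym_eq_neg_one [Fact p.Prime] (hp2 : p ≠ 2) {a : ℤ}
    (ha : legendreSym p a = -1) {s : K} (hs : s ^ 2 = a) : s ^ p = -s := by
  have hodd : p = 2 * (p / 2) + 1 := (Nat.two_mul_div_two_add_one_of_odd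
    ((Fact.out : p.Prime).odd_of_ne_two hp2)).symm
  have hpow : (a : K) ^ (p / 2) = -1 := by
    have h := congrArg (ZMod.castHom (dvd_refl p) K) (legendreSym.eq_pow p a)
    rw [ha, map_pow, map_intCast, map_intCast, Int.cast_neg, Int.cast_one] at h
    exact h.symm
  rw [hodd, pow_succ, pow_mul, hs, hpow, neg_one_mul]

theorem sum_lucasU_mul_truncLog_div_two_pow_eq_zero [Fact p.Prime] (h2 : (2 : K) ≠ 0) {x : K}
    (hx : x ^ (p + 1) = 1) (hx1 : x ≠ 1) (hxx : x ≠ x⁻¹) (hsum : 2 * (x + x⁻¹) = 1) :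
    ∑ k ∈ range p, (lucasU 1 4 (k + 1) : K) * truncLog k 1 / 2 ^ k = 0 := by
  have hx0 : x ≠ 0 := by rintro rfl; simp at hx
  have hterm : ∀ k, (lucasU 1 4 (k + 1) : K) * truncLog k 1 / 2 ^ k * (x - x⁻¹)
      = x * (truncLog k 1 * x ^ k) - x⁻¹ * (truncLog k 1 * x⁻¹ ^ k) := by
    intro k
    have hu := lucasU_mul_sub (A := 1) (B := 4) (a := 2 * x) (b := 2 * x⁻¹)
      (by push_cast; linear_combination hsum) (by push_cast; field_simp; norm_num) (k + 1)
    have hu' : (lucasU 1 4 (k + 1) : K) * (x - x⁻¹) = 2 ^ k * (x ^ (k + 1) - x⁻¹ ^ (k + 1)) :=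
      mul_left_cancel₀ h2 (by linear_combination hu)
    rw [div_mul_eq_mul_div, div_eq_iff (pow_ne_zero k h2)]
    linear_combination truncLog k 1 * hu'
  apply (mul_left_inj' (sub_ne_zero.mpr hxx)).mp
  rw [zero_mul, sum_mul, sum_congr rfl fun k _ => hterm k, sum_sub_distrib, ← mul_sum,
    ← mul_sum, sub_eq_zero]
  exact mul_sum_truncLog_mul_pow_inv h2 hx hx1

theorem sum_lucasU_mul_truncLog_div_two_pow_eq_zero_of_sq [Fact p.Prime] (hp5 : 5 < p) {s : K}
    (hs : s ^ 2 = -15) (hsp : s ^ p = -s) :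
    ∑ k ∈ range p, (lucasU 1 4 (k + 1) : K) * truncLog k 1 / 2 ^ k = 0 := by
  have hne : ∀ n : ℕ, n ≠ 0 → n ≤ 5 → (n : K) ≠ 0 :=
    fun n hn0 hn5 => natCast_ne_zero_of_lt hn0 (by omega)
  have h2 : (2 : K) ≠ 0 := mod_cast hne 2 two_ne_zero (by norm_num)
  have h3 : (3 : K) ≠ 0 := mod_cast hne 3 three_ne_zero (by norm_num)
  have h5 : (5 : K) ≠ 0 := mod_cast hne 5 (by norm_num) le_rfl
  have h4 : (4 : K) ≠ 0 := by simpa [show (4 : K) = 2 * 2 by norm_num] using h2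
  have hs0 : s ≠ 0 := by
    rintro rfl
    exact mul_ne_zero h3 h5 (by linear_combination hs)
  have hxy : (1 + s) / 4 * ((1 - s) / 4) = 1 := by
    field_simp; linear_combination -hs
  have hinv : ((1 + s) / 4)⁻¹ = (1 - s) / 4 := inv_eq_of_mul_eq_one_right hxy
  apply sum_lucasU_mul_truncLog_div_two_pow_eq_zero h2 (x := (1 + s) / 4)
  · rw [pow_succ, ← frobenius_def, map_div₀, map_add, map_one, map_ofNat, frobenius_def, hsp,
      ← sub_eq_add_neg, mul_comm, hxy]
  · intro h1
    have hs3 : s = 3 := by field_simp at h1; linear_combination h1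
    rw [hs3] at hs
    exact mul_ne_zero (mul_ne_zero (mul_ne_zero h2 h2) h2) h3 (by linear_combination hs)
  · rw [hinv]
    intro h0
    field_simp at h0
    exact hs0 ((mul_eq_zero.mp (by linear_combination h0 : (2 : K) * s = 0)).resolve_left h2)
  · rw [hinv]; field_simp; ring

end CharP

theorem legendreSym_neg_fifteen {p : ℕ} [Fact p.Prime] (hp2 : p ≠ 2)
    (h15 : p % 15 = 7 ∨ p % 15 = 11 ∨ p % 15 = 13 ∨ p % 15 = 14) :
    legendreSym p (-15) = -1 := by
  have hodd : p % 2 = 1 := ((Fact.out : p.Prime).eq_two_or_odd).resolve_left hp2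
  rw [jacobiSym.legendreSym.to_jacobiSym, jacobiSym.mod_right _ (Nat.odd_iff.mpr hodd)]
  have h60 : p % 60 = 7 ∨ p % 60 = 37 ∨ p % 60 = 11 ∨ p % 60 = 41 ∨ p % 60 = 13 ∨
      p % 60 = 43 ∨ p % 60 = 29 ∨ p % 60 = 59 := by omega
  rcases h60 with h | h | h | h | h | h | h | h <;> norm_num [h]

-- The local ring `ℤ_(p)`. On it `Rat.cast` into a field of characteristic `p` is reduction mod `p`;
-- off it, `Rat.cast` silently divides by zero.
def pIntegralRat (p : ℕ) [Fact p.Prime] : Subring ℚ where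
  carrier := {q | ¬ p ∣ q.den}
  zero_mem' := by simpa using (Fact.out : p.Prime).one_lt.ne'
  one_mem' := by simpa using (Fact.out : p.Prime).one_lt.ne'
  neg_mem' := by simp
  add_mem' {q r} hq hr h :=
    (Nat.Prime.dvd_mul Fact.out).not.mpr (not_or.mpr ⟨hq, hr⟩) (h.trans (Rat.add_den_dvd q r))
  mul_mem' {q r} hq hr h :=
    (Nat.Prime.dvd_mul Fact.out).not.mpr (not_or.mpr ⟨hq, hr⟩) (h.trans (Rat.mul_den_dvd q r))

namespace pIntegralRat

variable {p : ℕ} [Fact p.Prime]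

theorem mem_iff {q : ℚ} : q ∈ pIntegralRat p ↔ ¬ p ∣ q.den := Iff.rfl

theorem inv_natCast_mem {n : ℕ} (hn : ¬ p ∣ n) : (n : ℚ)⁻¹ ∈ pIntegralRat p := by
  have hn0 : 0 < n := Nat.pos_of_ne_zero (by rintro rfl; exact hn (dvd_zero p))
  rwa [mem_iff, Rat.inv_natCast_den_of_pos hn0]

theorem harmonic_mem {k : ℕ} (hk : k < p) : harmonic k ∈ pIntegralRat p :=
  Subring.sum_mem _ fun i hi =>
    inv_natCast_mem (Nat.not_dvd_of_pos_of_lt i.succ_pos (by rw [mem_range] at hi; omega))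

variable {K : Type*} [Field K] [CharP K p]

theorem den_cast_ne_zero {q : ℚ} (hq : q ∈ pIntegralRat p) : (q.den : K) ≠ 0 :=
  fun h => hq ((CharP.cast_eq_zero_iff K p _).mp h)

theorem cast_mul {q r : ℚ} (hq : q ∈ pIntegralRat p) (hr : r ∈ pIntegralRat p) :
    ((q * r : ℚ) : K) = q * r :=
  Rat.cast_mul_of_ne_zero (den_cast_ne_zero hq) (den_cast_ne_zero hr)

theorem cast_sum {ι : Type*} {s : Finset ι} {f : ι → ℚ}
    (hf : ∀ i ∈ s, f i ∈ pIntegralRat p) :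
    ((∑ i ∈ s, f i : ℚ) : K) = ∑ i ∈ s, (f i : K) := by
  classical
  induction s using Finset.induction_on with
  | empty => simp
  | insert i s hi ih =>
    have hs : ∀ j ∈ s, f j ∈ pIntegralRat p := fun j hj => hf j (mem_insert_of_mem hj)
    rw [sum_insert hi, sum_insert hi, ← ih hs, Rat.cast_add_of_ne_zero
      (den_cast_ne_zero (hf i (mem_insert_self i s))) (den_cast_ne_zero (Subring.sum_mem _ hs))]

theorem cast_div_natCast {q : ℚ} (hq : q ∈ pIntegralRat p) {n : ℕ} (hn : ¬ p ∣ n) :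
    ((q / n : ℚ) : K) = q / n := by
  rw [div_eq_mul_inv, cast_mul hq (inv_natCast_mem hn), Rat.cast_inv_nat, div_eq_mul_inv]

theorem cast_harmonic {k : ℕ} (hk : k < p) : (harmonic k : K) = truncLog k 1 := by
  rw [harmonic, cast_sum fun i hi => inv_natCast_mem
    (Nat.not_dvd_of_pos_of_lt i.succ_pos (by rw [mem_range] at hi; omega)), truncLog]
  simp only [Rat.cast_inv_nat, one_pow, one_div]

theorem intCast_mul_harmonic_div_mem (a : ℤ) {k n : ℕ} (hk : k < p) (hn : ¬ p ∣ n) :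
    (a : ℚ) * harmonic k / n ∈ pIntegralRat p :=
  mul_mem (mul_mem (intCast_mem _ a) (harmonic_mem hk)) (inv_natCast_mem hn)

theorem cast_intCast_mul_harmonic_div (a : ℤ) {k n : ℕ} (hk : k < p) (hn : ¬ p ∣ n) :
    (((a : ℚ) * harmonic k / n : ℚ) : K) = a * truncLog k 1 / n := by
  rw [cast_div_natCast (mul_mem (intCast_mem _ a) (harmonic_mem hk)) hn,
    cast_mul (intCast_mem _ a) (harmonic_mem hk), Rat.cast_intCast, cast_harmonic hk]

theorem ratCong_zero_of_cast_eq_zero {q : ℚ} (hq : q ∈ pIntegralRat p) (h : (q : K) = 0) :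
    ratCong p 1 q 0 := by
  rw [Rat.cast_def, div_eq_zero_iff, or_iff_left (den_cast_ne_zero hq),
    CharP.intCast_eq_zero_iff K p] at h
  obtain ⟨m, hm⟩ := h
  refine ⟨Rat.divInt m q.den, ?_, fun hr => hq ?_⟩
  · rw [sub_zero, pow_one, Rat.divInt_eq_div]
    nth_rw 1 [← Rat.num_div_den q]
    rw [hm]
    push_cast
    ring
  · exact Int.natCast_dvd_natCast.mp
      ((Int.natCast_dvd_natCast.mpr hr).trans (Rat.den_dvd m q.den))

end pIntegralRat

open pIntegralRat in
theorem stmt13 (p : ℕ) (hp : p.Prime) (hp5 : 5 < p)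
    (h15 : p % 15 = 7 ∨ p % 15 = 11 ∨ p % 15 = 13 ∨ p % 15 = 14) :
    ratCong p 1
      (∑ k ∈ Finset.range p, (lucasU 1 4 (k + 1) : ℚ) * harmonic k / 2 ^ k) 0 := by
  have : Fact p.Prime := ⟨hp⟩
  have hp2 : p ≠ 2 := by omega
  obtain ⟨s, hs⟩ := IsAlgClosed.exists_pow_nat_eq (-15 : AlgebraicClosure (ZMod p)) two_pos
  have hsp := pow_char_eq_neg_of_legendreSym_eq_neg_one hp2 (legendreSym_neg_fifteen hp2 h15)
    (s := s) (by rw [hs]; push_cast; rfl)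
  have h2k : ∀ k, ¬ p ∣ 2 ^ k := fun k h =>
    hp2 ((Nat.prime_dvd_prime_iff_eq hp Nat.prime_two).mp (hp.dvd_of_dvd_pow h))
  simp only [show ∀ k : ℕ, (2 : ℚ) ^ k = ((2 ^ k : ℕ) : ℚ) by simp]
  have hmem := fun k (hk : k ∈ range p) =>
    intCast_mul_harmonic_div_mem (lucasU 1 4 (k + 1)) (mem_range.mp hk) (h2k k)
  refine ratCong_zero_of_cast_eq_zero (K := AlgebraicClosure (ZMod p)) (Subring.sum_mem _ hmem) ?_
  rw [cast_sum hmem, ← sum_lucasU_mul_truncLog_div_two_pow_eq_zero_of_sq hp5 hs hsp]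
  refine sum_congr rfl fun k hk => ?_
  rw [cast_intCast_mul_harmonic_div _ (mem_range.mp hk) (h2k k), Nat.cast_pow, Nat.cast_ofNat]
end

section
/- Let A, B be integers, let Δ = A² − 4B, and let p be an odd prime with p ∤ B·Δ. Let ε = (Δ/p) ∈ {1, −1} be the Legendre symbol. Then in the ring ℤ[X]/(X² − A·X + B), the image α of X satisfies α^{p−ε} ≡ B^{(1−ε)/2} (mod p), i.e., α^{p−ε} − B^{(1−ε)/2} lies in the ideal generated by p. -/
/-!
Work modulo `p`. The element `δ = 2α - A` satisfies `δ² = Δ`, so Euler's criterion gives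
`δ ^ p = Δ ^ ((p - 1) / 2) δ = ε δ`, while the Frobenius gives `δ ^ p = 2 α ^ p - A`. Hence
`α ^ p = α` if `ε = 1` and `α ^ p = A - α`, the conjugate root, if `ε = -1`. As `α (A - α) = B`
is a unit, this yields `α ^ (p - 1) = 1`, respectively `α ^ (p + 1) = B`.
-/

section NatCastEqZero

variable {S : Type*} [CommRing S] {p : ℕ}

theorem intCast_eq_of_zmod_eq (hS : (p : S) = 0) {m n : ℤ} (h : (m : ZMod p) = n) :
    (m : S) = n := by
  obtain ⟨k, hk⟩ := (ZMod.intCast_eq_intCast_iff_dvd_sub m n p).mp h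
  have hcast : (n : S) - m = p * k := by exact_mod_cast congrArg (Int.cast : ℤ → S) hk
  rw [hS, zero_mul, sub_eq_zero] at hcast
  exact hcast.symm

theorem add_pow_prime_of_natCast_eq_zero (hp : p.Prime) (hS : (p : S) = 0) (x y : S) :
    (x + y) ^ p = x ^ p + y ^ p := by
  obtain ⟨r, hr⟩ := exists_add_pow_prime_eq hp x y
  rw [hr, hS]
  ring

variable [Fact p.Prime]

theorem intCast_pow_prime_of_natCast_eq_zero (hS : (p : S) = 0) (n : ℤ) : (n : S) ^ p = n := by
  rw [← Int.cast_pow]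
  exact intCast_eq_of_zmod_eq hS (by push_cast; exact ZMod.pow_card _)

theorem intCast_pow_div_two_eq_legendreSym (hS : (p : S) = 0) (n : ℤ) :
    (n : S) ^ (p / 2) = legendreSym p n := by
  rw [← Int.cast_pow]
  exact intCast_eq_of_zmod_eq hS (by rw [legendreSym.eq_pow]; push_cast; rfl)

theorem isUnit_intCast_of_not_dvd (hS : (p : S) = 0) {n : ℤ} (hn : ¬ (p : ℤ) ∣ n) :
    IsUnit (n : S) := by
  have hn0 : (n : ZMod p) ≠ 0 := mt (ZMod.intCast_zmod_eq_zero_iff_dvd n p).mp hn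
  have hinv : ((n * ((n : ZMod p)⁻¹).val : ℤ) : S) = ((1 : ℤ) : S) :=
    intCast_eq_of_zmod_eq hS (by push_cast; rw [ZMod.natCast_zmod_val, mul_inv_cancel₀ hn0])
  push_cast at hinv
  exact IsUnit.of_mul_eq_one _ hinv

end NatCastEqZero

section QuadraticRoot

variable {S : Type*} [CommRing S] {p : ℕ} [Fact p.Prime] {A B : ℤ} {a : S}

theorem two_mul_pow_prime_sub_eq_legendreSym_mul (hS : (p : S) = 0) (hodd : Odd p)
    (ha : a ^ 2 - A * a + B = 0) :
    2 * a ^ p - A = legendreSym p (A ^ 2 - 4 * B) * (2 * a - A) := by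
  have hsq : (2 * a - A) ^ 2 = ((A ^ 2 - 4 * B : ℤ) : S) := by
    push_cast
    linear_combination 4 * ha
  have h2 : (2 : S) ^ p = 2 := by exact_mod_cast intCast_pow_prime_of_natCast_eq_zero hS 2
  calc 2 * a ^ p - A = (2 * a + -(A : S)) ^ p := by
        rw [add_pow_prime_of_natCast_eq_zero Fact.out hS, mul_pow, h2, hodd.neg_pow,
          intCast_pow_prime_of_natCast_eq_zero hS]
        ring
    _ = ((2 * a - A) ^ 2) ^ (p / 2) * (2 * a - A) := by
        rw [← pow_mul, ← pow_succ, Nat.two_mul_div_two_add_one_of_odd hodd, sub_eq_add_neg]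
    _ = legendreSym p (A ^ 2 - 4 * B) * (2 * a - A) := by
        rw [hsq, intCast_pow_div_two_eq_legendreSym hS]

theorem pow_sub_legendreSym_eq (hS : (p : S) = 0) (hodd : Odd p)
    (hpB : ¬ (p : ℤ) ∣ B * (A ^ 2 - 4 * B)) (ha : a ^ 2 - A * a + B = 0) :
    a ^ ((p : ℤ) - legendreSym p (A ^ 2 - 4 * B)).toNat =
      (B : S) ^ ((1 - legendreSym p (A ^ 2 - 4 * B)) / 2).toNat := by
  have hp : p.Prime := Fact.out
  have h2 : IsUnit (2 : S) := by
    have hp2 : ¬ (p : ℤ) ∣ 2 := fun h => by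
      have := (Nat.prime_dvd_prime_iff_eq hp Nat.prime_two).mp (by exact_mod_cast h)
      exact Nat.not_even_iff_odd.mpr hodd (this ▸ even_two)
    exact_mod_cast isUnit_intCast_of_not_dvd hS hp2
  have hB : IsUnit (B : S) := isUnit_intCast_of_not_dvd hS fun h => hpB (h.mul_right _)
  have hconj : a * (A - a) = B := by linear_combination -ha
  have key := two_mul_pow_prime_sub_eq_legendreSym_mul hS hodd ha
  have hΔ : ((A ^ 2 - 4 * B : ℤ) : ZMod p) ≠ 0 :=
    mt (ZMod.intCast_zmod_eq_zero_iff_dvd _ p).mp fun h => hpB (h.mul_left _)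
  rcases legendreSym.eq_one_or_neg_one p hΔ with hε | hε <;> rw [hε] at key ⊢
  · have hap : a ^ p = a := h2.mul_left_cancel (by push_cast at key; linear_combination key)
    have hunit : IsUnit a := isUnit_of_mul_isUnit_left (hconj ▸ hB)
    rw [show ((p : ℤ) - 1).toNat = p - 1 by omega, show ((1 : ℤ) - 1) / 2 = 0 by norm_num,
      Int.toNat_zero, pow_zero]
    refine hunit.mul_left_cancel ?_
    rw [← pow_succ', Nat.sub_add_cancel hp.one_le, hap, mul_one]
  · have hap : a ^ p = A - a := h2.mul_left_cancel (by push_cast at key; linear_combination key)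
    rw [show ((p : ℤ) - -1).toNat = p + 1 by omega, show ((1 : ℤ) - -1) / 2 = 1 by norm_num,
      Int.toNat_one, pow_one, pow_succ, hap, mul_comm, hconj]

end QuadraticRoot

open Polynomial in
theorem stmt14 (A B : ℤ) (p : ℕ) [Fact p.Prime] (hodd : Odd p)
    (hpB : ¬ ((p : ℤ) ∣ B * (A ^ 2 - 4 * B))) (ε : ℤ)
    (hε : ε = legendreSym p (A ^ 2 - 4 * B)) :
    (Ideal.Quotient.mk (Ideal.span {X ^ 2 - C A * X + C B}) X) ^ ((p : ℤ) - ε).toNat -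
      (B : Polynomial ℤ ⧸ Ideal.span {X ^ 2 - C A * X + C B}) ^ ((1 - ε) / 2).toNat ∈
      Ideal.span {((p : ℕ) : Polynomial ℤ ⧸ Ideal.span {X ^ 2 - C A * X + C B})} := by
  set R := ℤ[X] ⧸ Ideal.span {X ^ 2 - C A * X + C B}
  set I := Ideal.span {((p : ℕ) : R)}
  have hS : ((p : ℕ) : R ⧸ I) = 0 := by
    rw [← map_natCast (Ideal.Quotient.mk I), Ideal.Quotient.mk_singleton_self]
  have hroot : (Ideal.Quotient.mk I (Ideal.Quotient.mk _ X)) ^ 2 -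
      A * Ideal.Quotient.mk I (Ideal.Quotient.mk _ X) + B = 0 := by
    simpa [C_eq_intCast] using
      congrArg (Ideal.Quotient.mk I) (Ideal.Quotient.mk_singleton_self (X ^ 2 - C A * X + C B))
  refine Ideal.Quotient.eq_zero_iff_mem.mp ?_
  rw [map_sub, map_pow, map_pow, map_intCast, sub_eq_zero, hε]
  exact pow_sub_legendreSym_eq (S := R ⧸ I) hS hodd hpB hroot
end

section
/- Let u_n = u_n(1,4) and let p > 5 be a prime, with ε = (p/15) the Jacobi symbol. Then u_p − 2^{p−1}·ε ≡ 2^{ε−2}·u_{p−ε} (mod p²) as rational numbers; equivalently, 2^{2−ε}·(u_p − 2^{p−1}·ε) ≡ u_{p−ε} (mod p²) as integers. -/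
open Polynomial

namespace S16

def u (n : ℕ) : ℤ := lucasU 1 4 n
def v (n : ℕ) : ℤ := 2 * u (n + 1) - u n

lemma u0 : u 0 = 0 := rfl
lemma u1 : u 1 = 1 := rfl
lemma u_add_two (n : ℕ) : u (n + 2) = u (n + 1) - 4 * u n := by
  show lucasU 1 4 (n+2) = _
  rw [lucasU]; push_cast [u]; ring

lemma v0 : v 0 = 2 := by simp [v, u0, u1]
lemma v1 : v 1 = 1 := by
  have : u 2 = 1 := by rw [u_add_two, u1, u0]; ring
  simp [v, this, u1]

lemma v_add_two (n : ℕ) : v (n + 2) = v (n + 1) - 4 * v n := by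
  simp only [v, u_add_two]; ring

lemma norm_id (n : ℕ) : u (n+1)^2 - u (n+1) * u n + 4 * u n ^ 2 = 4 ^ n := by
  induction n with
  | zero => rw [u0, u1]; ring
  | succ n ih => rw [u_add_two]; linear_combination 4 * ih

lemma not_dvd_fifteen (p : ℕ) (hp : p.Prime) (hp5 : 5 < p) : ¬ p ∣ 15 := by
  intro hd
  have hle := Nat.le_of_dvd (by norm_num) hd
  interval_cases p <;> revert hp hd <;> decide

lemma key (p : ℕ) (hp : p.Prime) (hp5 : 5 < p) [Fact p.Prime] (ε : ℤ)
    (hleg : (legendreSym p (-15) : ℤ) = ε) (hε : ε = 1 ∨ ε = -1)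
    (n : ℕ) (hn : (n : ℤ) = p - ε) :
    (u n : ZMod p) = 0 ∧ (v n : ZMod p) = 2 ^ (n + 1) := by
  classical
  set f : (ZMod p)[X] := X ^ 2 + C 15 with hf
  have hdeg : f.degree ≠ 0 := by
    rw [hf, Polynomial.degree_X_pow_add_C (by norm_num)]
    decide
  haveI : Nontrivial (AdjoinRoot f) := AdjoinRoot.nontrivial f hdeg
  set R := AdjoinRoot f with hR
  haveI : CharP R p := charP_of_injective_algebraMap (algebraMap (ZMod p) R).injective p
  set s : R := AdjoinRoot.root f with hsdef
  have hs : s ^ 2 = -15 := by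
    have h0 : (AdjoinRoot.mk f) f = 0 := AdjoinRoot.mk_self
    rw [hf, map_add, map_pow, AdjoinRoot.mk_X, AdjoinRoot.mk_C] at h0
    rw [map_ofNat (AdjoinRoot.of f) 15] at h0
    linear_combination h0
  have inj : ∀ a b : ℤ, ((a : R) = (b : R)) → ((a : ZMod p) = (b : ZMod p)) := by
    intro a b h
    apply (algebraMap (ZMod p) R).injective
    rwa [map_intCast, map_intCast]
  -- Binet
  have FB : ∀ m : ℕ, (2 * (1 + s) ^ m = 2 ^ m * ((v m : R) + (u m : R) * s)) ∧
      (2 * (1 - s) ^ m = 2 ^ m * ((v m : R) - (u m : R) * s)) := by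
    intro m
    induction m using Nat.twoStepInduction with
    | zero => constructor <;> · rw [v0, u0]; push_cast; ring
    | one => constructor <;> · rw [v1, u1]; push_cast; ring
    | more m ih1 ih2 =>
      have h1 : (1 + s) ^ 2 = 2 * (1 + s) - 16 := by linear_combination hs
      have h2 : (1 - s) ^ 2 = 2 * (1 - s) - 16 := by linear_combination hs
      rw [v_add_two, u_add_two]
      constructor
      · push_cast
        linear_combination ((1+s)^m * 2) * h1 + 2 * ih2.1 - 16 * ih1.1
      · push_cast
        linear_combination ((1-s)^m * 2) * h2 + 2 * ih2.2 - 16 * ih1.2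
  -- Frobenius
  have hpodd : p % 2 = 1 := Nat.odd_iff.mp (hp.odd_of_ne_two (by omega))
  have hsp : s ^ p = (ε : R) * s := by
    have hk : p = 2 * (p / 2) + 1 := by omega
    have e1 : s ^ p = (s ^ 2) ^ (p / 2) * s := by
      rw [← pow_mul, ← pow_succ]
      congr 1
    have e2 : ((-15 : ℤ) : ZMod p) ^ (p / 2) = ((ε : ℤ) : ZMod p) := by
      rw [← legendreSym.eq_pow, hleg]
    have e3 : ((-15 : R)) ^ (p / 2) = (ε : R) := by
      have := congrArg (algebraMap (ZMod p) R) e2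
      rw [map_pow, map_intCast, map_intCast] at this
      push_cast at this ⊢
      exact this
    rw [e1, hs, e3]
  have h2K : (2 : ZMod p) ≠ 0 := by
    intro h
    have hd : p ∣ 2 := by
      have := (ZMod.natCast_eq_zero_iff 2 p).mp (by exact_mod_cast h)
      exact this
    have := Nat.le_of_dvd (by norm_num) hd
    omega
  have h15K : (15 : ZMod p) ≠ 0 := by
    intro h
    exact not_dvd_fifteen p hp hp5
      ((ZMod.natCast_eq_zero_iff 15 p).mp (by exact_mod_cast h))
  rcases FB n with ⟨F, G⟩
  rcases hε with hε1 | hε1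
  · -- ε = 1
    subst hε1
    have np : n + 1 = p := by omega
    have hsp1 : s ^ p = s := by rw [hsp]; push_cast; ring
    have hpow1 : (1 + s) ^ p = 1 + s := by rw [add_pow_char, one_pow, hsp1]
    have hpow2 : (1 - s) ^ p = 1 - s := by rw [sub_pow_char, one_pow, hsp1]
    have H1 : 2 * (1 + s) ^ n * (1 + s) = 2 * (1 + s) := by
      rw [mul_assoc, ← pow_succ, np, hpow1]
    have H2 : 2 * (1 - s) ^ n * (1 - s) = 2 * (1 - s) := by
      rw [mul_assoc, ← pow_succ, np, hpow2]
    have claim1 : ((2 ^ (n+1) * (v n - 15 * u n) : ℤ) : R) = ((4 : ℤ) : R) := by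
      push_cast
      linear_combination H1 + H2 - (1+s) * F - (1-s) * G - (2^(n+1) * (u n : R)) * hs
    have claim2 : ((15 * (2 ^ (n+1) * (v n + u n)) : ℤ) : R) = ((60 : ℤ) : R) := by
      push_cast
      linear_combination (-s) * (H1 - H2 - (1+s) * F + (1-s) * G) +
        (2^(n+1) * ((v n : R) + (u n : R)) - 4) * hs
    have c1 := inj _ _ claim1
    have c2 := inj _ _ claim2
    push_cast at c1 c2
    have h2pow : (2 : ZMod p) ^ (n+1) = 2 := by rw [np, ZMod.pow_card]
    rw [h2pow] at c1 c2
    have hu : (u n : ZMod p) = 0 := by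
      have h480 : ((480 : ZMod p)) * (u n : ZMod p) = 0 := by linear_combination c2 - 15 * c1
      have hne : (480 : ZMod p) ≠ 0 := by
        have h480' : (480 : ZMod p) = 2 ^ 5 * 15 := by norm_num
        rw [h480']; exact mul_ne_zero (pow_ne_zero _ h2K) h15K
      exact (mul_eq_zero.mp h480).resolve_left hne
    have hv : (v n : ZMod p) = 2 ^ (n+1) := by
      rw [h2pow]
      have h2v : (2 : ZMod p) * (v n : ZMod p) = 2 * 2 := by linear_combination c1 + 30 * hu
      exact mul_left_cancel₀ h2K h2v
    exact ⟨hu, hv⟩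
  · -- ε = -1
    subst hε1
    have np : n = p + 1 := by omega
    have hsp1 : s ^ p = -s := by rw [hsp]; push_cast; ring
    have hpow1 : (1 + s) ^ p = 1 - s := by rw [add_pow_char, one_pow, hsp1]; ring
    have hpow2 : (1 - s) ^ p = 1 + s := by rw [sub_pow_char, one_pow, hsp1]; ring
    have H1 : 2 * (1 + s) ^ n = 32 := by
      rw [np, pow_succ, hpow1]
      linear_combination (-2 : R) * hs
    have H2 : 2 * (1 - s) ^ n = 32 := by
      rw [np, pow_succ, hpow2]
      linear_combination (-2 : R) * hs
    have claim1 : ((2 ^ (n+1) * v n : ℤ) : R) = ((64 : ℤ) : R) := by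
      push_cast
      linear_combination H1 + H2 - F - G
    have claim2 : ((15 * (2 ^ (n+1) * u n) : ℤ) : R) = ((0 : ℤ) : R) := by
      push_cast
      linear_combination s * (F - G - H1 + H2) + (2^(n+1) * (u n : R)) * hs
    have c1 := inj _ _ claim1
    have c2 := inj _ _ claim2
    push_cast at c1 c2
    have h2pow : (2 : ZMod p) ^ (n+1) = 8 := by
      rw [np, show p + 1 + 1 = p + 2 from rfl, pow_add, ZMod.pow_card]
      norm_num
    rw [h2pow] at c1 c2
    have hu : (u n : ZMod p) = 0 := by
      have h120 : ((120 : ZMod p)) * (u n : ZMod p) = 0 := by linear_combination c2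
      have hne : (120 : ZMod p) ≠ 0 := by
        have h120' : (120 : ZMod p) = 2 ^ 3 * 15 := by norm_num
        rw [h120']; exact mul_ne_zero (pow_ne_zero _ h2K) h15K
      exact (mul_eq_zero.mp h120).resolve_left hne
    have hv : (v n : ZMod p) = 2 ^ (n+1) := by
      rw [h2pow]
      have h8 : (8 : ZMod p) ≠ 0 := by
        have : (8 : ZMod p) = 2 ^ 3 := by norm_num
        rw [this]; exact pow_ne_zero _ h2K
      have h8v : (8 : ZMod p) * (v n : ZMod p) = 8 * 8 := by linear_combination c1
      exact mul_left_cancel₀ h8 h8v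
    exact ⟨hu, hv⟩

lemma sq_dvd_aux {q a b : ℤ} (hq : Prime q) (h : q ^ 2 ∣ a * b) (hb : ¬ q ∣ b) : q ^ 2 ∣ a := by
  have hqa : q ∣ a := by
    have h1 : q ∣ a * b := dvd_trans (dvd_pow_self q two_ne_zero) h
    exact (hq.dvd_mul.mp h1).resolve_right hb
  obtain ⟨c, rfl⟩ := hqa
  rw [pow_two] at h ⊢
  rw [mul_assoc] at h
  have h2 : q ∣ c * b := (mul_dvd_mul_iff_left hq.ne_zero).mp h
  exact mul_dvd_mul_left q ((hq.dvd_mul.mp h2).resolve_right hb)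

lemma main (p : ℕ) (hp : p.Prime) (hp5 : 5 < p) [Fact p.Prime] (ε : ℤ)
    (hleg : (legendreSym p (-15) : ℤ) = ε) (hε : ε = 1 ∨ ε = -1)
    (n : ℕ) (hn : (n : ℤ) = p - ε) :
    (p : ℤ) ^ 2 ∣ v n - 2 ^ (n + 1) := by
  obtain ⟨hu, hv⟩ := key p hp hp5 ε hleg hε n hn
  have hpu : (p : ℤ) ∣ u n := (ZMod.intCast_zmod_eq_zero_iff_dvd (u n) p).mp hu
  have hpow4 : (4 : ℤ) ^ (n + 1) = 2 ^ (n + 1) * 2 ^ (n + 1) := by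
    rw [← mul_pow]; norm_num
  have hfactor : (v n - 2 ^ (n + 1)) * (v n + 2 ^ (n + 1)) = -15 * (u n * u n) := by
    have hni := norm_id n
    simp only [v]
    linear_combination (4 : ℤ) * hni + hpow4
  have hd1 : (p : ℤ) ^ 2 ∣ (v n - 2 ^ (n + 1)) * (v n + 2 ^ (n + 1)) := by
    rw [hfactor, pow_two]
    exact dvd_mul_of_dvd_right (mul_dvd_mul hpu hpu) (-15)
  have hndvd : ¬ (p : ℤ) ∣ (v n + 2 ^ (n + 1)) := by
    intro h
    have h0 : ((v n + 2 ^ (n + 1) : ℤ) : ZMod p) = 0 :=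
      (ZMod.intCast_zmod_eq_zero_iff_dvd _ p).mpr h
    push_cast at h0
    rw [hv] at h0
    have h2K : (2 : ZMod p) ≠ 0 := by
      intro h2
      have hd : p ∣ 2 := (ZMod.natCast_eq_zero_iff 2 p).mp (by exact_mod_cast h2)
      have := Nat.le_of_dvd (by norm_num) hd
      omega
    have h2n : (2 : ZMod p) ^ (n + 2) = 0 := by linear_combination h0
    exact h2K ((pow_eq_zero_iff (Nat.succ_ne_zero (n+1))).mp h2n)
  exact sq_dvd_aux (Nat.prime_iff_prime_int.mp hp) hd1 hndvd

lemma jac_eq_leg (p : ℕ) (hp : p.Prime) (hp5 : 5 < p) [Fact p.Prime] :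
    jacobiSym (p : ℤ) 15 = legendreSym p (-15) := by
  have hpodd : p % 2 = 1 := Nat.odd_iff.mp (hp.odd_of_ne_two (by omega))
  have hqr := jacobiSym.quadratic_reciprocity (a := p) (b := 15)
      (Nat.odd_iff.mpr hpodd) (by decide)
  have hpow : ((-1 : ℤ)) ^ (p / 2 * (15 / 2)) = (-1) ^ (p / 2) := by
    have h7 : (15 : ℕ) / 2 = 7 := by norm_num
    rw [h7]
    rcases Nat.even_or_odd (p / 2) with h | h
    · rw [Even.neg_one_pow (h.mul_right 7), Even.neg_one_pow h]
    · rw [Odd.neg_one_pow (h.mul (by decide)), Odd.neg_one_pow h]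
  have hleg15 : legendreSym p 15 = jacobiSym (15 : ℤ) p :=
    jacobiSym.legendreSym.to_jacobiSym p 15
  have hmul : legendreSym p (-15) = legendreSym p (-1) * legendreSym p 15 := by
    rw [show (-15 : ℤ) = -1 * 15 by norm_num, legendreSym.mul]
  rw [hmul, legendreSym.at_neg_one (by omega), ZMod.χ₄_eq_neg_one_pow hpodd, hleg15]
  rw [show ((15:ℕ):ℤ) = (15:ℤ) by norm_num] at hqr
  rw [hqr, hpow]

end S16

theorem stmt16 (p : ℕ) (hp : p.Prime) (hp5 : 5 < p) (ε : ℤ) (hε : ε = jacobiSym p 15) :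
    2 ^ (2 - ε).toNat * (lucasU 1 4 p - 2 ^ (p - 1) * ε) ≡
      lucasU 1 4 ((p : ℤ) - ε).toNat [ZMOD (p : ℤ) ^ 2] := by
  haveI : Fact p.Prime := ⟨hp⟩
  have hleg : (legendreSym p (-15) : ℤ) = ε := by
    rw [hε, S16.jac_eq_leg p hp hp5]
  have h15 : ((-15 : ℤ) : ZMod p) ≠ 0 := by
    intro h
    have hd : (p : ℤ) ∣ -15 := (ZMod.intCast_zmod_eq_zero_iff_dvd _ p).mp h
    have hd2 : (p : ℤ) ∣ 15 := dvd_neg.mp hd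
    exact S16.not_dvd_fifteen p hp hp5 (by exact_mod_cast hd2)
  have hεpm : ε = 1 ∨ ε = -1 := by
    rcases legendreSym.eq_one_or_neg_one p h15 with h | h
    · exact Or.inl (by rw [← hleg, h])
    · exact Or.inr (by rw [← hleg, h])
  obtain ⟨m, rfl⟩ : ∃ m, p = m + 1 := ⟨p - 1, by omega⟩
  rcases hεpm with h1 | h1 <;> subst h1
  · -- ε = 1
    have hmain := S16.main (m+1) hp hp5 1 hleg (Or.inl rfl) m (by push_cast; ring)
    have ht1 : ((2 : ℤ) - 1).toNat = 1 := by norm_num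
    have ht2 : (((m+1 : ℕ) : ℤ) - 1).toNat = m := by omega
    rw [ht1, ht2]
    refine Int.modEq_iff_dvd.mpr ?_
    obtain ⟨c, hc⟩ := hmain
    refine ⟨-c, ?_⟩
    simp only [S16.v, S16.u] at hc
    simp only [Nat.add_sub_cancel]
    linear_combination -hc
  · -- ε = -1
    have hmain := S16.main (m+1) hp hp5 (-1) hleg (Or.inr rfl) (m+2) (by push_cast; ring)
    have ht1 : ((2 : ℤ) - (-1)).toNat = 3 := by decide
    have ht2 : (((m+1 : ℕ) : ℤ) - (-1)).toNat = m + 2 := by omega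
    rw [ht1, ht2]
    refine Int.modEq_iff_dvd.mpr ?_
    obtain ⟨c, hc⟩ := hmain
    refine ⟨c, ?_⟩
    simp only [S16.v] at hc
    rw [show m + 2 + 1 = m + 1 + 2 from by omega, S16.u_add_two,
      show m + 1 + 1 = m + 2 from by omega] at hc
    simp only [S16.u] at hc
    simp only [Nat.add_sub_cancel]
    linear_combination hc
end

section
/- Let p be a prime with p ≡ 3 (mod 4). Then the following exact identity of rational numbers holds: ∑_{k=0}^{p-1} (2^{−k} + 1)·u_k(2,2) = 2 − (−1)^{(p+1)/4}·2^{(p−1)/2}. -/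
lemma lucasU_two_two_add_four (n : ℕ) : lucasU 2 2 (n + 4) = -4 * lucasU 2 2 n := by
  simp only [lucasU]
  ring

lemma lucasU_two_two_four_mul (m : ℕ) : lucasU 2 2 (4 * m) = 0 := by
  induction m with
  | zero => rfl
  | succ m ih => rw [Nat.mul_succ, lucasU_two_two_add_four, ih, mul_zero]

lemma lucasU_two_two_four_mul_add_three (m : ℕ) :
    lucasU 2 2 (4 * m + 3) = (-1) ^ m * 2 ^ (2 * m + 1) := by
  induction m with
  | zero => rfl
  | succ m ih =>
    rw [show 4 * (m + 1) + 3 = 4 * m + 3 + 4 by ring, lucasU_two_two_add_four, ih]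
    ring

lemma sum_range_two_zpow_neg_add_one_mul_lucasU_two_two (n : ℕ) :
    ∑ k ∈ Finset.range n, ((2 : ℚ) ^ (-(k : ℤ)) + 1) * (lucasU 2 2 k : ℚ) =
      2 + lucasU 2 2 n - lucasU 2 2 (n + 1) - lucasU 2 2 (n + 1) / 2 ^ n := by
  induction n with
  | zero => norm_num [lucasU]
  | succ n ih =>
    have hrec : (lucasU 2 2 (n + 2) : ℚ) = 2 * lucasU 2 2 (n + 1) - 2 * lucasU 2 2 n := by
      rw [lucasU]; push_cast; ring
    rw [Finset.sum_range_succ, ih, hrec, zpow_neg, zpow_natCast]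
    field_simp
    ring

theorem stmt19_general (p : ℕ) (h4 : p % 4 = 3) :
    ∑ k ∈ Finset.range p, ((2 : ℚ) ^ (-(k : ℤ)) + 1) * (lucasU 2 2 k : ℚ) =
      2 - (-1 : ℚ) ^ ((p + 1) / 4) * 2 ^ ((p - 1) / 2) := by
  obtain ⟨m, rfl⟩ : ∃ m, p = 4 * m + 3 := ⟨p / 4, by omega⟩
  rw [sum_range_two_zpow_neg_add_one_mul_lucasU_two_two, show 4 * m + 3 + 1 = 4 * (m + 1) by ring,
    lucasU_two_two_four_mul, lucasU_two_two_four_mul_add_three,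
    show 4 * (m + 1) / 4 = m + 1 by omega, show (4 * m + 3 - 1) / 2 = 2 * m + 1 by omega]
  push_cast
  ring

theorem stmt19 (p : ℕ) (hp : p.Prime) (h4 : p % 4 = 3) :
    ∑ k ∈ Finset.range p, ((2 : ℚ) ^ (-(k : ℤ)) + 1) * (lucasU 2 2 k : ℚ) =
      2 - (-1 : ℚ) ^ ((p + 1) / 4) * 2 ^ ((p - 1) / 2) :=
  stmt19_general p h4
end
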